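/- arXiv:math/0703888 — 9 statements merged into one kernel-verified Lean document; each statement's English description precedes it below -/
import Mathlib

section
/- Let q be a real polynomial of degree at most n. Then for all real x with |x| > 1, |q(x)| ≤ |T_n(x)| · sup_{t ∈ [−1,1]} |q(t)|. -/
open Finset Polynomial Real

-- sign of a product of nonzero reals
lemma prod_sign_aux {ι : Type*} (s : Finset ι) (f : ι → ℝ) (h : ∀ j ∈ s, f j ≠ 0) :
    ∏ j ∈ s, f j = (-1) ^ (#(s.filter (fun j => f j < 0))) * ∏ j ∈ s, |f j| := by
  have : ∏ j ∈ s, f j = ∏ j ∈ s, ((if f j < 0 then (-1:ℝ) else 1) * |f j|) := by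
    refine Finset.prod_congr rfl fun j hj => ?_
    by_cases hneg : f j < 0
    · simp [hneg, abs_of_neg hneg]
    · simp [hneg, abs_of_nonneg (not_lt.mp hneg)]
  rw [this, Finset.prod_mul_distrib, Finset.prod_ite, Finset.prod_const,
    Finset.prod_const_one, mul_one]

-- natDegree of Chebyshev T
lemma chebT_natDegree_le : ∀ n : ℕ, (Polynomial.Chebyshev.T ℝ n).natDegree ≤ n := by
  intro n
  induction n using Nat.strong_induction_on with
  | _ n ih =>
    match n with
    | 0 => simp [Polynomial.Chebyshev.T_zero]
    | 1 => simp [Polynomial.Chebyshev.T_one]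
    | (m+2) =>
      have h2 : ((m:ℤ)+2) = ((m+1:ℕ):ℤ) + 1 := by push_cast; ring
      rw [show ((m+2:ℕ):ℤ) = ((m:ℤ)+2) by push_cast; ring]
      rw [Polynomial.Chebyshev.T_add_two]
      refine le_trans (Polynomial.natDegree_sub_le _ _) ?_
      have hm1 := ih (m+1) (by omega)
      have hm := ih m (by omega)
      have : (2 * Polynomial.X * Polynomial.Chebyshev.T ℝ (m+1:ℕ)).natDegree ≤ m + 2 := by
        refine le_trans (Polynomial.natDegree_mul_le) ?_
        have : (2 * Polynomial.X : Polynomial ℝ).natDegree ≤ 1 := by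
          refine le_trans (Polynomial.natDegree_mul_le) ?_
          simp
        omega
      rw [show ((m:ℤ)+1) = ((m+1:ℕ):ℤ) by push_cast; ring, show ((m:ℤ)) = ((m:ℕ):ℤ) by norm_num]
      simp only [max_le_iff]
      constructor
      · exact this
      · omega
noncomputable def chebNode (n : ℕ) (k : Fin (n+1)) : ℝ := Real.cos (k * π / n)

lemma chebNode_strictAnti (n : ℕ) (hn : 0 < n) : StrictAnti (chebNode n) := by
  intro i j hij
  unfold chebNode
  apply Real.cos_lt_cos_of_nonneg_of_le_pi
  · positivity
  · rw [div_le_iff₀ (by positivity)]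
    calc (j:ℝ) * π ≤ n * π := by
          have : (j:ℝ) ≤ n := by exact_mod_cast Nat.le_of_lt_succ j.isLt
          nlinarith [Real.pi_pos]
      _ = π * n := by ring
  · have hi : (i:ℝ) < j := by exact_mod_cast hij
    have hn' : (0:ℝ) < n := by positivity
    have hπ := Real.pi_pos
    gcongr

lemma chebNode_abs_le (n : ℕ) (k : Fin (n+1)) : |chebNode n k| ≤ 1 :=
  Real.abs_cos_le_one _

lemma chebT_eval_node (n : ℕ) (hn : 0 < n) (k : Fin (n+1)) :
    (Polynomial.Chebyshev.T ℝ n).eval (chebNode n k) = (-1) ^ (k:ℕ) := by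
  unfold chebNode
  rw [Polynomial.Chebyshev.T_real_cos]
  have : ((n:ℤ):ℝ) * ((k:ℝ) * π / n) = (k:ℕ) * π := by
    have : (n:ℝ) ≠ 0 := by positivity
    field_simp
    rw [Int.cast_natCast]; ring
  rw [this]
  simpa using Real.cos_nat_mul_pi_sub 0 (k:ℕ)

lemma basis_eval (n : ℕ) (i : Fin (n+1)) (x : ℝ) :
    (Lagrange.basis Finset.univ (chebNode n) i).eval x =
      ∏ j ∈ Finset.univ.erase i, ((x - chebNode n j) / (chebNode n i - chebNode n j)) := by
  simp only [Lagrange.basis, Lagrange.basisDivisor, Polynomial.eval_prod,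
    Polynomial.eval_mul, Polynomial.eval_C, Polynomial.eval_sub, Polynomial.eval_X]
  exact Finset.prod_congr rfl fun j _ => by ring

lemma basis_sign (n : ℕ) (hn : 0 < n) (x : ℝ) (hx : 1 < |x|) (i : Fin (n+1)) :
    (if 0 < x then (1:ℝ) else (-1)^n) * (-1)^(i:ℕ) *
      (Lagrange.basis Finset.univ (chebNode n) i).eval x =
    |(Lagrange.basis Finset.univ (chebNode n) i).eval x| := by
  have hanti := chebNode_strictAnti n hn
  set v := chebNode n with hv
  set s : Finset (Fin (n+1)) := Finset.univ.erase i with hs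
  have hfne : ∀ j ∈ s, (x - v j) / (v i - v j) ≠ 0 := by
    intro j hj
    have hji : j ≠ i := (Finset.mem_erase.mp hj).1
    have h1 : v i - v j ≠ 0 := sub_ne_zero.mpr fun h => hji (hanti.injective h).symm
    have h2 : x - v j ≠ 0 := by
      intro h
      rw [sub_eq_zero] at h
      have h4 : |x| ≤ 1 := by rw [h]; exact chebNode_abs_le n j
      linarith
    exact div_ne_zero h2 h1
  have hprod := prod_sign_aux s (fun j => (x - v j) / (v i - v j)) hfne
  rw [basis_eval, ← hv, ← hs, Finset.abs_prod]
  have hile : (i:ℕ) ≤ n := Nat.lt_succ_iff.mp i.isLt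
  rcases lt_or_ge 0 x with hx0 | hx0
  · have hx1 : 1 < x := by rwa [abs_of_pos hx0] at hx
    have hfilter : s.filter (fun j => (x - v j) / (v i - v j) < 0) = Finset.Iio i := by
      have hcongr : s.filter (fun j => (x - v j) / (v i - v j) < 0)
          = s.filter (fun j => j < i) := by
        refine Finset.filter_congr fun j hj => ?_
        have hji : j ≠ i := (Finset.mem_erase.mp hj).1
        have hb : 0 < x - v j := by
          have := (abs_le.mp (chebNode_abs_le n j)).2; linarith
        rw [div_neg_iff]
        constructor
        · rintro (⟨_, h⟩ | ⟨h, _⟩)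
          · exact hanti.lt_iff_gt.mp (by linarith)
          · linarith
        · intro h
          exact Or.inl ⟨hb, by linarith [hanti h]⟩
      rw [hcongr, hs, Finset.filter_erase, Finset.erase_eq_of_notMem (by simp)]
      ext j; simp
    rw [hfilter, Fin.card_Iio] at hprod
    rw [if_pos hx0, one_mul, hprod, ← mul_assoc, ← pow_add,
      Even.neg_one_pow ⟨(i:ℕ), by ring⟩, one_mul]
  · have hx1 : x < -1 := by
      rw [abs_of_nonpos hx0] at hx; linarith
    have hfilter : s.filter (fun j => (x - v j) / (v i - v j) < 0) = Finset.Ioi i := by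
      have hcongr : s.filter (fun j => (x - v j) / (v i - v j) < 0)
          = s.filter (fun j => i < j) := by
        refine Finset.filter_congr fun j hj => ?_
        have hji : j ≠ i := (Finset.mem_erase.mp hj).1
        have hb : x - v j < 0 := by
          have := (abs_le.mp (chebNode_abs_le n j)).1; linarith
        rw [div_neg_iff]
        constructor
        · rintro (⟨h, _⟩ | ⟨_, h⟩)
          · linarith
          · exact hanti.lt_iff_gt.mp (show v j < v i by linarith)
        · intro h
          exact Or.inr ⟨hb, by linarith [hanti h]⟩
      rw [hcongr, hs, Finset.filter_erase, Finset.erase_eq_of_notMem (by simp)]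
      ext j; simp
    rw [hfilter, Fin.card_Ioi] at hprod
    have hpow : ((-1:ℝ))^n * (-1)^(i:ℕ) * (-1)^(n+1-1-(i:ℕ)) = 1 := by
      rw [← pow_add, ← pow_add, show n + (i:ℕ) + (n+1-1-(i:ℕ)) = 2*n from by omega, pow_mul]
      norm_num
    rw [if_neg (by linarith), hprod, ← mul_assoc, hpow, one_mul]
theorem chebyshev_inequality_outside (n : ℕ) (q : Polynomial ℝ) (hq : q.natDegree ≤ n)
    (x : ℝ) (hx : 1 < |x|) :
    |q.eval x| ≤ |(Polynomial.Chebyshev.T ℝ n).eval x| *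
      ⨆ t : Set.Icc (-1 : ℝ) 1, |q.eval (t : ℝ)| := by
  set M := ⨆ t : Set.Icc (-1 : ℝ) 1, |q.eval (t : ℝ)| with hM
  have hbdd : BddAbove (Set.range fun t : Set.Icc (-1:ℝ) 1 => |q.eval (t:ℝ)|) := by
    have hr : Set.range (fun t : Set.Icc (-1:ℝ) 1 => |q.eval (t:ℝ)|)
        = (fun y => |q.eval y|) '' Set.Icc (-1:ℝ) 1 := by
      rw [show (fun t : Set.Icc (-1:ℝ) 1 => |q.eval (t:ℝ)|)
          = (fun y => |q.eval y|) ∘ Subtype.val from rfl, Set.range_comp, Subtype.range_coe]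
    rw [hr]
    exact (isCompact_Icc.image ((q.continuous_aeval).abs)).bddAbove
  have hMle : ∀ y ∈ Set.Icc (-1:ℝ) 1, |q.eval y| ≤ M := by
    intro y hy
    exact le_ciSup hbdd ⟨y, hy⟩
  have hM0 : 0 ≤ M :=
    le_trans (abs_nonneg _) (hMle 0 ⟨by norm_num, by norm_num⟩)
  rcases Nat.eq_zero_or_pos n with rfl | hn
  · -- n = 0
    have hT : (Polynomial.Chebyshev.T ℝ (0:ℕ)).eval x = 1 := by
      norm_num [Polynomial.Chebyshev.T_zero]
    rw [hT]
    have hc := Polynomial.eq_C_of_natDegree_le_zero hq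
    have : q.eval x = q.eval 0 := by rw [hc]; simp
    rw [this]
    simpa using hMle 0 ⟨by norm_num, by norm_num⟩
  · -- n ≥ 1
    set v := chebNode n with hv
    have hvs : Set.InjOn v (Finset.univ : Finset (Fin (n+1))) :=
      ((chebNode_strictAnti n hn).injective).injOn
    have hev : ∀ p : Polynomial ℝ, p.natDegree ≤ n →
        p.eval x = ∑ i : Fin (n+1), p.eval (v i) *
          (Lagrange.basis Finset.univ v i).eval x := by
      intro p hp
      have hdeg : p.degree < (#(Finset.univ : Finset (Fin (n+1))) : ℕ) := by
        rw [Finset.card_univ, Fintype.card_fin]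
        exact lt_of_le_of_lt Polynomial.degree_le_natDegree
          (by exact_mod_cast Nat.lt_succ_of_le hp)
      conv_lhs => rw [Lagrange.eq_interpolate hvs hdeg]
      rw [Lagrange.interpolate_apply, Polynomial.eval_finset_sum]
      exact Finset.sum_congr rfl fun i _ => by rw [Polynomial.eval_mul, Polynomial.eval_C]
    set ε : ℝ := if 0 < x then (1:ℝ) else (-1)^n with hε
    have hεabs : |ε| = 1 := by
      rw [hε]; split <;> simp
    set S : ℝ := ∑ i : Fin (n+1), |(Lagrange.basis Finset.univ v i).eval x| with hS
    have hS0 : 0 ≤ S := Finset.sum_nonneg fun i _ => abs_nonneg _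
    have hTsum : ε * (Polynomial.Chebyshev.T ℝ n).eval x = S := by
      rw [hev _ (chebT_natDegree_le n), Finset.mul_sum, hS]
      refine Finset.sum_congr rfl fun i _ => ?_
      rw [show (Polynomial.Chebyshev.T ℝ n).eval (v i) = (-1)^(i:ℕ) from
        chebT_eval_node n hn i, ← basis_sign n hn x hx i, hε, hv]
      ring
    have hTabs : |(Polynomial.Chebyshev.T ℝ n).eval x| = S := by
      rw [← abs_of_nonneg hS0, ← hTsum, abs_mul, hεabs, one_mul]
    calc |q.eval x| = |∑ i : Fin (n+1), q.eval (v i) *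
          (Lagrange.basis Finset.univ v i).eval x| := by rw [← hev q hq]
      _ ≤ ∑ i : Fin (n+1), |q.eval (v i) * (Lagrange.basis Finset.univ v i).eval x| :=
          Finset.abs_sum_le_sum_abs _ _
      _ = ∑ i : Fin (n+1), |q.eval (v i)| * |(Lagrange.basis Finset.univ v i).eval x| := by
          simp [abs_mul]
      _ ≤ ∑ i : Fin (n+1), M * |(Lagrange.basis Finset.univ v i).eval x| := by
          refine Finset.sum_le_sum fun i _ => ?_
          refine mul_le_mul_of_nonneg_right ?_ (abs_nonneg _)
          exact hMle _ ⟨Real.neg_one_le_cos _, Real.cos_le_one _⟩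
      _ = M * S := by rw [hS, Finset.mul_sum]
      _ = |(Polynomial.Chebyshev.T ℝ n).eval x| * M := by rw [hTabs]; ring
end

section
/- Let b > 0, δ > 0, and let p be a real polynomial of degree at most n. Set k = (2δ/b)(1 + √(1 + b/δ)). Then sup_{x∈[0,b+δ]} |p(x)| ≤ (1+k)^n · sup_{x∈[0,b]} |p(x)|. -/
open Polynomial

lemma natDegree_T_le : ∀ n : ℕ, (Polynomial.Chebyshev.T ℝ (n : ℤ)).natDegree ≤ n := by
  intro n
  induction n using Nat.strong_induction_on with
  | _ n ih =>
    match n with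
    | 0 => simp [Polynomial.Chebyshev.T_zero]
    | 1 => simp [Polynomial.Chebyshev.T_one]
    | (k+2) =>
      have h := Polynomial.Chebyshev.T_add_two ℝ (k : ℤ)
      have hc : (((k+2 : ℕ)) : ℤ) = (k : ℤ) + 2 := by push_cast; ring
      have hc1 : (((k+1 : ℕ)) : ℤ) = (k : ℤ) + 1 := by push_cast; ring
      rw [hc, h]
      have h1 := ih (k+1) (by omega)
      have h0 := ih k (by omega)
      rw [hc1] at h1
      calc (2 * X * Polynomial.Chebyshev.T ℝ ((k:ℤ)+1) - Polynomial.Chebyshev.T ℝ (k:ℤ)).natDegree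
          ≤ max (2 * X * Polynomial.Chebyshev.T ℝ ((k:ℤ)+1)).natDegree
              (Polynomial.Chebyshev.T ℝ (k:ℤ)).natDegree := natDegree_sub_le _ _
        _ ≤ k + 2 := by
            refine max_le ?_ (by omega)
            calc (2 * X * Polynomial.Chebyshev.T ℝ ((k:ℤ)+1)).natDegree
                ≤ (2 * X : ℝ[X]).natDegree + (Polynomial.Chebyshev.T ℝ ((k:ℤ)+1)).natDegree :=
                  natDegree_mul_le
              _ ≤ 1 + (k+1) := by
                  have : (2 * X : ℝ[X]).natDegree ≤ 1 := by
                    simpa using natDegree_C_mul_le (2:ℝ) (X : ℝ[X])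
                  omega
              _ = k + 2 := by omega

lemma T_eval_eq (y s : ℝ) (hs : s^2 = y^2 - 1) : ∀ n : ℕ,
    2 * (Polynomial.Chebyshev.T ℝ (n : ℤ)).eval y = (y+s)^n + (y-s)^n := by
  intro n
  induction n using Nat.strong_induction_on with
  | _ n ih =>
    match n with
    | 0 => simp [Polynomial.Chebyshev.T_zero]; norm_num
    | 1 => simp [Polynomial.Chebyshev.T_one]; ring
    | (k+2) =>
      have h := Polynomial.Chebyshev.T_add_two ℝ (k : ℤ)
      have hc : (((k+2 : ℕ)) : ℤ) = (k : ℤ) + 2 := by push_cast; ring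
      have hc1 : (((k+1 : ℕ)) : ℤ) = (k : ℤ) + 1 := by push_cast; ring
      rw [hc, h]
      have h1 := ih (k+1) (by omega)
      have h0 := ih k (by omega)
      rw [hc1] at h1
      simp only [eval_sub, eval_mul, eval_ofNat, eval_X]
      linear_combination (2*y) * h1 - h0 - ((y+s)^k + (y-s)^k) * hs

open Real Finset in
lemma cheb_growth (n : ℕ) (hn : 0 < n) (q : Polynomial ℝ) (hq : q.natDegree ≤ n) (M : ℝ)
    (hM : ∀ t : ℝ, -1 ≤ t → t ≤ 1 → |q.eval t| ≤ M) {y : ℝ} (hy : 1 ≤ y) :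
    |q.eval y| ≤ (y + Real.sqrt (y^2 - 1))^n * M := by
  have hnR : (0:ℝ) < n := by exact_mod_cast hn
  have hπ := Real.pi_pos
  set v : ℕ → ℝ := fun i => Real.cos (i * π / n) with hv
  have hmem : ∀ i : ℕ, i ≤ n → (i * π / n : ℝ) ∈ Set.Icc 0 π := by
    intro i hi
    constructor
    · positivity
    · rw [div_le_iff₀ hnR]
      have : (i:ℝ) ≤ n := by exact_mod_cast hi
      nlinarith
  have hanti : ∀ i j : ℕ, i ≤ n → j ≤ n → i < j → v j < v i := by
    intro i j hi hj hij
    apply Real.strictAntiOn_cos (hmem i hi) (hmem j hj)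
    have h1 : (i:ℝ) < j := by exact_mod_cast hij
    gcongr
  have hv1 : ∀ i : ℕ, -1 ≤ v i ∧ v i ≤ 1 := fun i => ⟨Real.neg_one_le_cos _, Real.cos_le_one _⟩
  have hvy : ∀ i : ℕ, v i ≤ y := fun i => (hv1 i).2.trans hy
  set s : Finset ℕ := Finset.range (n+1) with hsdef
  have hvs : Set.InjOn v s := by
    intro i hi j hj hij
    simp only [hsdef, coe_range, Set.mem_Iio] at hi hj
    rcases lt_trichotomy i j with h | h | h
    · exact absurd hij (hanti i j (by omega) (by omega) h).ne'
    · exact h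
    · exact absurd hij (hanti j i (by omega) (by omega) h).ne
  have hcard : #s = n + 1 := by simp [hsdef]
  have hdeg : q.degree < (#s : ℕ) := by
    rw [hcard]
    exact lt_of_le_of_lt Polynomial.degree_le_natDegree (by exact_mod_cast Nat.lt_succ_of_le hq)
  set L : ℕ → ℝ := fun i => (Lagrange.basis s v i).eval y with hL
  have hLprod : ∀ i : ℕ, L i = ∏ j ∈ s.erase i, ((v i - v j)⁻¹ * (y - v j)) := by
    intro i
    simp [hL, Lagrange.basis, Lagrange.basisDivisor, Polynomial.eval_prod]
  have hqsum : q.eval y = ∑ i ∈ s, q.eval (v i) * L i := by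
    conv_lhs => rw [Lagrange.eq_interpolate hvs hdeg]
    simp [Lagrange.interpolate_apply, Polynomial.eval_finset_sum, hL]
  have hsign : ∀ i ∈ s, 0 ≤ (-1:ℝ)^i * L i := by
    intro i hi
    simp only [hsdef, mem_range] at hi
    have hfilt : (s.erase i).filter (· < i) = Finset.range i := by
      ext j
      simp only [mem_filter, mem_erase, hsdef, mem_range]
      omega
    have hpow : (-1:ℝ)^i = ∏ j ∈ s.erase i, (if j < i then (-1:ℝ) else 1) := by
      rw [Finset.prod_ite, Finset.prod_const, Finset.prod_const_one, hfilt, Finset.card_range,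
        mul_one]
    rw [hLprod, hpow, ← Finset.prod_mul_distrib]
    apply Finset.prod_nonneg
    intro j hj
    rw [mem_erase, hsdef, mem_range] at hj
    have hyj : 0 ≤ y - v j := by linarith [hvy j]
    by_cases hji : j < i
    · have hlt : v i < v j := hanti j i (by omega) (by omega) hji
      have hinv : (v i - v j)⁻¹ ≤ 0 := inv_nonpos.2 (by linarith)
      simp only [if_pos hji]
      nlinarith
    · have hij : i < j := by omega
      have hlt : v j < v i := hanti i j (by omega) (by omega) hij
      have hinv : 0 ≤ (v i - v j)⁻¹ := (inv_pos.2 (by linarith)).le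
      simp only [if_neg hji]
      nlinarith
  have hTdeg : (Polynomial.Chebyshev.T ℝ (n:ℤ)).degree < (#s : ℕ) := by
    rw [hcard]
    exact lt_of_le_of_lt Polynomial.degree_le_natDegree
      (by exact_mod_cast Nat.lt_succ_of_le (natDegree_T_le n))
  have hTval : ∀ i : ℕ, (Polynomial.Chebyshev.T ℝ (n:ℤ)).eval (v i) = (-1:ℝ)^i := by
    intro i
    have h1 : (Polynomial.Chebyshev.T ℝ (n:ℤ)).eval (Real.cos (i * π / n))
        = Real.cos ((n:ℤ) * (i * π / n)) := Polynomial.Chebyshev.T_real_cos _ _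
    have h2 : ((n:ℤ):ℝ) * ((i:ℝ) * π / n) = i * π := by
      push_cast
      field_simp
    have h3 : Real.cos ((i:ℝ) * π) = (-1:ℝ)^i := by
      simpa using Real.cos_nat_mul_pi_sub 0 i
    rw [hv]
    simp only []
    rw [h1, h2, h3]
  have hTsum : (Polynomial.Chebyshev.T ℝ (n:ℤ)).eval y = ∑ i ∈ s, (-1:ℝ)^i * L i := by
    conv_lhs => rw [Lagrange.eq_interpolate hvs hTdeg]
    simp [Lagrange.interpolate_apply, Polynomial.eval_finset_sum, hL, hTval]
  have hM0 : 0 ≤ M := (abs_nonneg _).trans (hM 1 (by norm_num) le_rfl)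
  set u : ℝ := y + Real.sqrt (y^2 - 1) with hu
  set w : ℝ := y - Real.sqrt (y^2 - 1) with hw
  have hs2 : (Real.sqrt (y^2 - 1))^2 = y^2 - 1 := Real.sq_sqrt (by nlinarith)
  have hTe : 2 * (Polynomial.Chebyshev.T ℝ (n:ℤ)).eval y = u^n + w^n :=
    T_eval_eq y _ hs2 n
  have hw0 : 0 ≤ w := by
    rw [hw]
    have : Real.sqrt (y^2-1) ≤ Real.sqrt (y^2) := Real.sqrt_le_sqrt (by nlinarith)
    rw [Real.sqrt_sq (by linarith)] at this
    linarith
  have hwu : w ≤ u := by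
    have := Real.sqrt_nonneg (y^2-1)
    rw [hu, hw]; linarith
  have hTu : (Polynomial.Chebyshev.T ℝ (n:ℤ)).eval y ≤ u^n := by
    have hwn : w^n ≤ u^n := pow_le_pow_left₀ hw0 hwu n
    nlinarith [pow_nonneg hw0 n]
  calc |q.eval y| = |∑ i ∈ s, q.eval (v i) * L i| := by rw [hqsum]
    _ ≤ ∑ i ∈ s, |q.eval (v i) * L i| := Finset.abs_sum_le_sum_abs _ _
    _ ≤ ∑ i ∈ s, M * ((-1:ℝ)^i * L i) := by
        apply Finset.sum_le_sum
        intro i hi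
        rw [abs_mul]
        have hLabs : |L i| = (-1:ℝ)^i * L i := by
          have := hsign i hi
          calc |L i| = |(-1:ℝ)^i * L i| := by
                rw [abs_mul, abs_pow, abs_neg, abs_one, one_pow, one_mul]
            _ = (-1:ℝ)^i * L i := abs_of_nonneg this
        rw [hLabs]
        exact mul_le_mul_of_nonneg_right (hM _ (hv1 i).1 (hv1 i).2)
          (hLabs ▸ abs_nonneg (L i))
    _ = M * (Polynomial.Chebyshev.T ℝ (n:ℤ)).eval y := by rw [hTsum, Finset.mul_sum]
    _ ≤ M * u^n := mul_le_mul_of_nonneg_left hTu hM0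
    _ = u^n * M := mul_comm _ _

theorem norm_comparison_extend (b δ : ℝ) (hb : 0 < b) (hδ : 0 < δ)
    (n : ℕ) (p : Polynomial ℝ) (hp : p.natDegree ≤ n) :
    (⨆ x : Set.Icc (0 : ℝ) (b + δ), |p.eval (x : ℝ)|) ≤
      (1 + (2 * δ / b) * (1 + Real.sqrt (1 + b / δ))) ^ n *
        ⨆ x : Set.Icc (0 : ℝ) b, |p.eval (x : ℝ)| := by
  set M := ⨆ x : Set.Icc (0 : ℝ) b, |p.eval (x : ℝ)| with hMdef
  set K := 1 + (2 * δ / b) * (1 + Real.sqrt (1 + b / δ)) with hKdef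
  have hK1 : 1 ≤ K := by
    have := Real.sqrt_nonneg (1 + b/δ)
    rw [hKdef]
    have : 0 ≤ (2 * δ / b) * (1 + Real.sqrt (1 + b / δ)) := by positivity
    linarith
  have hbdd : BddAbove (Set.range fun x : Set.Icc (0:ℝ) b => |p.eval (x:ℝ)|) := by
    rw [show (Set.range fun x : Set.Icc (0:ℝ) b => |p.eval (x:ℝ)|)
        = (fun z : ℝ => |p.eval z|) '' Set.Icc 0 b from (Set.image_eq_range (fun z : ℝ => |p.eval z|) (Set.Icc 0 b)).symm]
    exact (isCompact_Icc.image_of_continuousOn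
      ((p.continuous_aeval.abs).continuousOn)).bddAbove
  have hMb : ∀ x : ℝ, 0 ≤ x → x ≤ b → |p.eval x| ≤ M := fun x h1 h2 =>
    le_ciSup hbdd (⟨x, h1, h2⟩ : Set.Icc (0:ℝ) b)
  have hM0 : 0 ≤ M := (abs_nonneg _).trans (hMb 0 le_rfl hb.le)
  have hKM : 0 ≤ K^n * M := mul_nonneg (pow_nonneg (by linarith) n) hM0
  apply Real.iSup_le _ hKM
  rintro ⟨x, hx1, hx2⟩
  simp only []
  rcases Nat.eq_zero_or_pos n with hn | hn
  · subst hn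
    obtain ⟨c, rfl⟩ : ∃ c, p = Polynomial.C c :=
      ⟨p.coeff 0, Polynomial.eq_C_of_natDegree_le_zero hp⟩
    simpa using hMb 0 le_rfl hb.le
  · set q : Polynomial ℝ := p.comp (Polynomial.C (b/2) * (Polynomial.X + 1)) with hqdef
    have hb2 : b/2 ≠ 0 := by positivity
    have hqdeg : q.natDegree ≤ n := by
      rw [hqdef, Polynomial.natDegree_comp]
      have h1 : (Polynomial.C (b/2) * (Polynomial.X + 1) : Polynomial ℝ).natDegree = 1 := by
        rw [Polynomial.natDegree_C_mul hb2]
        simpa using Polynomial.natDegree_X_add_C (1:ℝ)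
      rw [h1, mul_one]; exact hp
    have heval : ∀ t : ℝ, q.eval t = p.eval (b/2 * (t+1)) := by
      intro t; simp [hqdef, Polynomial.eval_comp]
    have hqM : ∀ t : ℝ, -1 ≤ t → t ≤ 1 → |q.eval t| ≤ M := by
      intro t h1 h2
      rw [heval]
      exact hMb _ (by nlinarith) (by nlinarith)
    set t : ℝ := 2*x/b - 1 with htdef
    have hxt : b/2 * (t+1) = x := by rw [htdef]; field_simp; ring
    have hpq : |p.eval x| = |q.eval t| := by rw [heval, hxt]
    have htlo : -1 ≤ t := by
      rw [htdef]
      have : 0 ≤ 2*x/b := by positivity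
      linarith
    by_cases ht : t ≤ 1
    · rw [hpq]
      calc |q.eval t| ≤ M := hqM t htlo ht
        _ ≤ K^n * M := le_mul_of_one_le_left hM0 (one_le_pow₀ hK1)
    · push_neg at ht
      have hcb := cheb_growth n hn q hqdeg M hqM ht.le
      rw [hpq]
      refine hcb.trans (mul_le_mul_of_nonneg_right ?_ hM0)
      have hy0 : t ≤ 1 + 2*δ/b := by
        rw [htdef]
        have : 2*x/b ≤ 2*(b+δ)/b := by gcongr
        have h2 : 2*(b+δ)/b = 2 + 2*δ/b := by field_simp
        linarith [h2 ▸ this]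
      have hKeq : 1 + 2*δ/b + Real.sqrt ((1 + 2*δ/b)^2 - 1) = K := by
        have h1 : (1 + 2*δ/b)^2 - 1 = (2*δ/b)^2 * (1 + b/δ) := by
          field_simp; ring
        rw [h1, Real.sqrt_mul (sq_nonneg _), Real.sqrt_sq (by positivity), hKdef]
        ring
      have hsq : Real.sqrt (t^2 - 1) ≤ Real.sqrt ((1 + 2*δ/b)^2 - 1) := by
        apply Real.sqrt_le_sqrt
        have hdb : 0 < 2*δ/b := by positivity
        have haux : 0 ≤ (1 + 2*δ/b - t) * (1 + 2*δ/b + t) :=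
          mul_nonneg (by linarith) (by simp only [htdef] at ht ⊢; linarith)
        nlinarith [haux]
      have hbase : t + Real.sqrt (t^2-1) ≤ K := by
        rw [← hKeq]; linarith
      exact pow_le_pow_left₀ (by positivity) hbase n
end

section
/- The function t_M(x) = t_M([0,x]) is continuous on (0,∞). -/
open Polynomial Filter Real Set Finset

/-- The monic integer transfinite diameter of a set `I ⊆ ℝ`:
`t_M(I) = lim_{n→∞} inf_{p ∈ M_n} ‖p‖_I^{1/n}`, where `M_n` is the set of monic
integer polynomials of degree `n` (the limit is formalized as a `limsup`). -/
noncomputable def monicIntTransDiam (I : Set ℝ) : ℝ :=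
  Filter.limsup (fun n : ℕ =>
    sInf {y : ℝ | ∃ p : Polynomial ℤ, p.Monic ∧ p.natDegree = n ∧
      y = (⨆ x : I, |Polynomial.aeval (x : ℝ) p|) ^ ((1 : ℝ) / n)}) Filter.atTop

noncomputable def chebR (y : ℝ) : ℝ := y + Real.sqrt (y ^ 2 - 1)
noncomputable def chebS (y : ℝ) : ℝ := y - Real.sqrt (y ^ 2 - 1)

lemma chebS_nonneg {y : ℝ} (hy : 1 ≤ y) : 0 ≤ chebS y := by
  have h0 : (0:ℝ) ≤ y := le_trans zero_le_one hy
  have h1 : Real.sqrt (y ^ 2 - 1) ≤ Real.sqrt (y ^ 2) := Real.sqrt_le_sqrt (by nlinarith)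
  rw [Real.sqrt_sq h0] at h1
  unfold chebS; linarith

lemma one_le_chebR {y : ℝ} (hy : 1 ≤ y) : 1 ≤ chebR y := by
  have := Real.sqrt_nonneg (y ^ 2 - 1)
  unfold chebR; linarith

lemma chebS_le_chebR {y : ℝ} (hy : 1 ≤ y) : chebS y ≤ chebR y := by
  have := Real.sqrt_nonneg (y ^ 2 - 1)
  unfold chebR chebS; linarith

lemma sq_sqrt' {y : ℝ} (hy : 1 ≤ y) : Real.sqrt (y ^ 2 - 1) ^ 2 = y ^ 2 - 1 := by
  rw [Real.sq_sqrt]; nlinarith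

lemma T_eval_eq_s5 {y : ℝ} (hy : 1 ≤ y) (n : ℕ) :
    (Polynomial.Chebyshev.T ℝ (n : ℤ)).eval y = (chebR y ^ n + chebS y ^ n) / 2 := by
  induction n using Nat.twoStepInduction with
  | zero => simp [Polynomial.Chebyshev.T_zero]
  | one =>
    norm_num [Polynomial.Chebyshev.T_one, chebR, chebS]
  | more n ih1 ih2 =>
    have h2 : ((n + 2 : ℕ) : ℤ) = (n : ℤ) + 2 := by push_cast; ring
    rw [h2, Polynomial.Chebyshev.T_add_two]
    have h1 : ((n + 1 : ℕ) : ℤ) = (n : ℤ) + 1 := by push_cast; ring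
    rw [h1] at ih2
    have hs := sq_sqrt' hy
    simp only [Polynomial.eval_sub, Polynomial.eval_mul, Polynomial.eval_ofNat,
      Polynomial.eval_X, ih1, ih2]
    have hr2 : chebR y ^ 2 = 2 * y * chebR y - 1 := by unfold chebR; nlinarith
    have hs2 : chebS y ^ 2 = 2 * y * chebS y - 1 := by unfold chebS; nlinarith
    have er : chebR y ^ (n + 2) = 2 * y * chebR y ^ (n+1) - chebR y ^ n := by
      have : chebR y ^ (n + 2) = chebR y ^ 2 * chebR y ^ n := by ring
      rw [this, hr2]; ring
    have es : chebS y ^ (n + 2) = 2 * y * chebS y ^ (n+1) - chebS y ^ n := by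
      have : chebS y ^ (n + 2) = chebS y ^ 2 * chebS y ^ n := by ring
      rw [this, hs2]; ring
    rw [er, es]; ring

lemma T_eval_le {y : ℝ} (hy : 1 ≤ y) (n : ℕ) :
    (Polynomial.Chebyshev.T ℝ (n : ℤ)).eval y ≤ chebR y ^ n := by
  rw [T_eval_eq_s5 hy n]
  have h1 : chebS y ^ n ≤ chebR y ^ n :=
    pow_le_pow_left₀ (chebS_nonneg hy) (chebS_le_chebR hy) n
  linarith

lemma T_degree_le (n : ℕ) : (Polynomial.Chebyshev.T ℝ (n : ℤ)).degree ≤ n := by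
  induction n using Nat.twoStepInduction with
  | zero => simpa [Polynomial.Chebyshev.T_zero] using Polynomial.degree_one_le
  | one => simp [Polynomial.Chebyshev.T_one, Polynomial.degree_X_le]
  | more n ih1 ih2 =>
    have h2 : ((n + 2 : ℕ) : ℤ) = (n : ℤ) + 2 := by push_cast; ring
    rw [h2, Polynomial.Chebyshev.T_add_two]
    have h1 : ((n + 1 : ℕ) : ℤ) = (n : ℤ) + 1 := by push_cast; ring
    rw [h1] at ih2
    refine le_trans (Polynomial.degree_sub_le _ _) ?_
    rw [max_le_iff]
    constructor
    · refine le_trans (Polynomial.degree_mul_le _ _) ?_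
      have h2X : ((2 : ℝ[X]) * Polynomial.X).degree ≤ 1 := by
        refine le_trans (Polynomial.degree_mul_le _ _) ?_
        have hc : ((2:ℝ[X])).degree ≤ 0 := by
          rw [show ((2:ℝ[X])) = Polynomial.C 2 from (map_ofNat Polynomial.C 2).symm]
          exact Polynomial.degree_C_le
        calc ((2:ℝ[X]).degree + Polynomial.X.degree) ≤ 0 + 1 := by
              gcongr
              exact Polynomial.degree_X_le
          _ = 1 := by norm_num
      calc (2 * Polynomial.X : ℝ[X]).degree + (Polynomial.Chebyshev.T ℝ ((n:ℤ)+1)).degree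
          ≤ 1 + (n + 1 : ℕ) := by gcongr
        _ = ((n + 2 : ℕ) : WithBot ℕ) := by
            push_cast
            exact_mod_cast by omega
    · exact le_trans ih1 (by exact_mod_cast WithBot.coe_le_coe.mpr (by omega))

lemma cheb_bound {n : ℕ} (hn : 1 ≤ n) (P : ℝ[X]) (hP : P.natDegree ≤ n)
    {y : ℝ} (hy : 1 < y) {M : ℝ}
    (hM : ∀ x ∈ Set.Icc (-1:ℝ) 1, |P.eval x| ≤ M) :
    |P.eval y| ≤ M * chebR y ^ n := by
  classical
  have hn0 : (n:ℝ) ≠ 0 := by positivity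
  have hπ : (0:ℝ) < π := Real.pi_pos
  set t : Finset ℕ := Finset.range (n+1) with ht
  set v : ℕ → ℝ := fun i => Real.cos (i * π / n) with hv
  have hang : ∀ i ∈ t, (i * π / n : ℝ) ∈ Set.Icc 0 π := by
    intro i hi
    rw [ht, Finset.mem_range] at hi
    constructor
    · positivity
    · rw [div_le_iff₀ (by positivity)]
      have : (i:ℝ) ≤ n := by exact_mod_cast Nat.lt_succ_iff.mp hi
      nlinarith
  have hvt : Set.InjOn v ↑t := by
    intro i hi j hj hij
    have h1 := Real.injOn_cos (hang i hi) (hang j hj) hij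
    field_simp at h1
    norm_cast at h1
  have hvlt : ∀ i ∈ t, ∀ j ∈ t, i < j → v j < v i := by
    intro i hi j hj hij
    refine Real.strictAntiOn_cos (hang i hi) (hang j hj) ?_
    have : (i:ℝ) < j := by exact_mod_cast hij
    rw [div_lt_div_iff₀ (by positivity) (by positivity)]
    have hnpos : (0:ℝ) < n := by positivity
    nlinarith [mul_lt_mul_of_pos_right (mul_lt_mul_of_pos_right this hπ) hnpos]
  have hvy : ∀ j ∈ t, v j < y := fun j _ => lt_of_le_of_lt (Real.cos_le_one _) hy
  set ℓ : ℕ → ℝ := fun i => Polynomial.eval y (Lagrange.basis t v i) with hℓ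
  -- evaluate basis
  have heval : ∀ i, ℓ i = ∏ j ∈ t.erase i, ((v i - v j)⁻¹ * (y - v j)) := by
    intro i
    rw [hℓ]
    simp only [Lagrange.basis, Polynomial.eval_prod, Lagrange.basisDivisor,
      Polynomial.eval_mul, Polynomial.eval_C, Polynomial.eval_sub, Polynomial.eval_X]
  -- sign of ℓ
  have hsign : ∀ i ∈ t, |ℓ i| = (-1)^i * ℓ i := by
    intro i hi
    have hnn : 0 ≤ (-1)^i * ℓ i := by
      rw [heval i]
      have hre : ((-1:ℝ))^i = ∏ j ∈ t.erase i, (if j < i then (-1:ℝ) else 1) := by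
        rw [Finset.prod_ite, Finset.prod_const, Finset.prod_const, one_pow, mul_one]
        congr 1
        have : (t.erase i).filter (· < i) = Finset.range i := by
          ext j
          simp only [Finset.mem_filter, Finset.mem_erase, ht, Finset.mem_range]
          rw [ht, Finset.mem_range] at hi
          omega
        rw [this, Finset.card_range]
      rw [hre, ← Finset.prod_mul_distrib]
      refine Finset.prod_nonneg ?_
      intro j hj
      have hjne : j ≠ i := (Finset.mem_erase.mp hj).1
      have hjt : j ∈ t := (Finset.mem_erase.mp hj).2
      have hyj : 0 < y - v j := sub_pos.mpr (hvy j hjt)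
      rcases lt_or_gt_of_ne hjne with h | h
      · have : v i < v j := hvlt j hjt i hi h
        have hneg : (v i - v j)⁻¹ < 0 := inv_lt_zero.mpr (by linarith)
        simp only [if_pos h]
        nlinarith
      · have : v j < v i := hvlt i hi j hjt h
        have hpos : 0 < (v i - v j)⁻¹ := inv_pos.mpr (by linarith)
        simp only [if_neg (by omega : ¬ j < i)]
        nlinarith
    calc |ℓ i| = |(-1)^i * ℓ i| := by rw [abs_mul, abs_pow, abs_neg, abs_one, one_pow, one_mul]
      _ = (-1)^i * ℓ i := abs_of_nonneg hnn
  have hcard : (#t : ℕ) = n + 1 := by rw [ht, Finset.card_range]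
  -- interpolation representation of any polynomial of degree ≤ n
  have hrep : ∀ Q : ℝ[X], Q.degree ≤ n →
      Q.eval y = ∑ i ∈ t, Q.eval (v i) * ℓ i := by
    intro Q hQ
    have hdeg : Q.degree < (#t : ℕ) := by
      rw [hcard]
      exact lt_of_le_of_lt hQ (by exact_mod_cast WithBot.coe_lt_coe.mpr (Nat.lt_succ_self n))
    have := Lagrange.eq_interpolate hvt hdeg
    conv_lhs => rw [this]
    rw [Lagrange.interpolate_apply, Polynomial.eval_finset_sum]
    refine Finset.sum_congr rfl fun i _ => ?_
    rw [Polynomial.eval_mul, Polynomial.eval_C]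
  -- values of T at nodes
  have hTnode : ∀ i ∈ t, (Polynomial.Chebyshev.T ℝ (n : ℤ)).eval (v i) = (-1)^i := by
    intro i hi
    rw [hv]
    simp only []
    rw [Polynomial.Chebyshev.T_real_cos]
    have : ((n:ℤ):ℝ) * ((i:ℝ) * π / n) = i * π - 0 := by
      push_cast
      field_simp
      ring
    rw [this, Real.cos_nat_mul_pi_sub, Real.cos_zero, mul_one]
  -- sum of |ℓ i| equals T(y)
  have hsumT : ∑ i ∈ t, |ℓ i| = (Polynomial.Chebyshev.T ℝ (n : ℤ)).eval y := by
    rw [hrep _ (T_degree_le n)]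
    refine Finset.sum_congr rfl fun i hi => ?_
    rw [hTnode i hi, ← hsign i hi]
  -- final estimate
  have hM0 : 0 ≤ M := le_trans (abs_nonneg _) (hM 0 ⟨by norm_num, by norm_num⟩)
  have hPdeg : P.degree ≤ (n : WithBot ℕ) :=
    Polynomial.degree_le_natDegree.trans (by exact_mod_cast hP)
  rw [hrep P hPdeg]
  calc |∑ i ∈ t, P.eval (v i) * ℓ i| ≤ ∑ i ∈ t, |P.eval (v i) * ℓ i| :=
        Finset.abs_sum_le_sum_abs _ _
    _ ≤ ∑ i ∈ t, M * |ℓ i| := by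
        refine Finset.sum_le_sum fun i hi => ?_
        rw [abs_mul]
        exact mul_le_mul_of_nonneg_right
          (hM _ ⟨Real.neg_one_le_cos _, Real.cos_le_one _⟩) (abs_nonneg _)
    _ = M * ∑ i ∈ t, |ℓ i| := by rw [Finset.mul_sum]
    _ = M * (Polynomial.Chebyshev.T ℝ (n : ℤ)).eval y := by rw [hsumT]
    _ ≤ M * chebR y ^ n := mul_le_mul_of_nonneg_left (T_eval_le hy.le n) hM0

lemma chebR_mono {y z : ℝ} (hy : 1 ≤ y) (hyz : y ≤ z) : chebR y ≤ chebR z := by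
  unfold chebR
  have : Real.sqrt (y ^ 2 - 1) ≤ Real.sqrt (z ^ 2 - 1) := Real.sqrt_le_sqrt (by nlinarith)
  linarith

noncomputable def nrm (a : ℝ) (p : Polynomial ℤ) : ℝ :=
  ⨆ x : (Set.Icc (0:ℝ) a), |Polynomial.aeval (x : ℝ) p|

lemma nrm_bddAbove (a : ℝ) (p : Polynomial ℤ) :
    BddAbove (Set.range fun x : (Set.Icc (0:ℝ) a) => |Polynomial.aeval (x:ℝ) p|) := by
  have h := ((isCompact_Icc (a := (0:ℝ)) (b := a)).image
    (f := fun x : ℝ => |Polynomial.aeval x p|)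
    ((Polynomial.continuous_aeval p).abs)).bddAbove
  rwa [Set.image_eq_range] at h

lemma le_nrm {a x : ℝ} (hx : x ∈ Set.Icc (0:ℝ) a) (p : Polynomial ℤ) :
    |Polynomial.aeval x p| ≤ nrm a p :=
  le_ciSup (nrm_bddAbove a p) (⟨x, hx⟩ : Set.Icc (0:ℝ) a)

lemma nrm_nonneg {a : ℝ} (ha : 0 ≤ a) (p : Polynomial ℤ) : 0 ≤ nrm a p :=
  le_trans (abs_nonneg _) (le_nrm ⟨le_refl 0, ha⟩ p)

lemma nrm_le {a M : ℝ} (ha : 0 ≤ a) (p : Polynomial ℤ)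
    (hb : ∀ x ∈ Set.Icc (0:ℝ) a, |Polynomial.aeval x p| ≤ M) : nrm a p ≤ M := by
  have : Nonempty (Set.Icc (0:ℝ) a) := ⟨⟨0, le_refl 0, ha⟩⟩
  exact ciSup_le fun x => hb x x.2

lemma nrm_mono {a b : ℝ} (ha : 0 ≤ a) (hab : a ≤ b) (p : Polynomial ℤ) :
    nrm a p ≤ nrm b p :=
  nrm_le ha p fun x hx => le_nrm ⟨hx.1, hx.2.trans hab⟩ p

lemma nrm_le_nrm_mul {a b : ℝ} (ha : 0 < a) (hab : a ≤ b) {p : Polynomial ℤ}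
    (hp : p.Monic) {n : ℕ} (hn : 1 ≤ n) (hdeg : p.natDegree = n) :
    nrm b p ≤ nrm a p * chebR (2 * b / a - 1) ^ n := by
  have hyb : (1:ℝ) ≤ 2 * b / a - 1 := by
    rw [le_sub_iff_add_le, le_div_iff₀ ha]
    linarith
  have hK1 : 1 ≤ chebR (2 * b / a - 1) := one_le_chebR hyb
  have hK0 : 0 ≤ chebR (2 * b / a - 1) := le_trans zero_le_one hK1
  have hKn : 1 ≤ chebR (2 * b / a - 1) ^ n := one_le_pow₀ hK1
  set P : Polynomial ℝ := p.map (algebraMap ℤ ℝ) with hPdef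
  have haev : ∀ x : ℝ, Polynomial.aeval x p = P.eval x := by
    intro x
    rw [hPdef, Polynomial.eval_map, Polynomial.aeval_def]
  refine nrm_le (le_trans ha.le hab) p fun x hx => ?_
  rcases le_or_gt x a with hxa | hxa
  · exact le_trans (le_nrm ⟨hx.1, hxa⟩ p)
      (le_mul_of_one_le_right (nrm_nonneg ha.le p) hKn)
  · -- use the Chebyshev bound with the rescaled polynomial
    set Q : Polynomial ℝ := P.comp (Polynomial.C (a/2) * Polynomial.X + Polynomial.C (a/2))
      with hQdef
    have hPdeg : P.natDegree = n := by rw [hPdef, hp.natDegree_map, hdeg]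
    have hQdeg : Q.natDegree = n := by
      rw [hQdef, Polynomial.natDegree_comp, hPdeg, Polynomial.natDegree_linear (by positivity : (a/2:ℝ) ≠ 0), mul_one]
    have hQeval : ∀ t : ℝ, Q.eval t = P.eval (a/2 * t + a/2) := by
      intro t
      rw [hQdef, Polynomial.eval_comp, Polynomial.eval_add, Polynomial.eval_mul,
        Polynomial.eval_C, Polynomial.eval_X]
    have hy : 1 < 2 * x / a - 1 := by
      rw [lt_sub_iff_add_lt, lt_div_iff₀ ha]
      linarith
    have hMQ : ∀ t ∈ Set.Icc (-1:ℝ) 1, |Q.eval t| ≤ nrm a p := by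
      intro t ht
      rw [hQeval t, ← haev]
      refine le_nrm ⟨?_, ?_⟩ p
      · nlinarith [ht.1, ht.2]
      · nlinarith [ht.1, ht.2]
    have hb := cheb_bound hn Q (le_of_eq hQdeg) hy hMQ
    rw [hQeval] at hb
    have hxeq : a/2 * (2 * x / a - 1) + a/2 = x := by field_simp; ring
    rw [hxeq] at hb
    rw [haev x]
    refine le_trans hb ?_
    have h1 : chebR (2 * x / a - 1) ≤ chebR (2 * b / a - 1) := by
      refine chebR_mono hy.le ?_
      have : x ≤ b := hx.2
      gcongr
    exact mul_le_mul_of_nonneg_left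
      (pow_le_pow_left₀ (le_trans zero_le_one (one_le_chebR hy.le)) h1 n)
      (nrm_nonneg ha.le p)

def SS (a : ℝ) (n : ℕ) : Set ℝ :=
  {y : ℝ | ∃ p : Polynomial ℤ, p.Monic ∧ p.natDegree = n ∧ y = (nrm a p) ^ ((1 : ℝ) / n)}

noncomputable def seqA (a : ℝ) (n : ℕ) : ℝ := sInf (SS a n)

lemma SS_nonempty (a : ℝ) (n : ℕ) : (SS a n).Nonempty :=
  ⟨_, Polynomial.X ^ n, Polynomial.monic_X_pow n, Polynomial.natDegree_X_pow n, rfl⟩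

lemma SS_nonneg {a : ℝ} (ha : 0 ≤ a) {n : ℕ} : ∀ y ∈ SS a n, 0 ≤ y := by
  rintro y ⟨p, hm, hd, rfl⟩
  exact Real.rpow_nonneg (nrm_nonneg ha p) _

lemma SS_bddBelow {a : ℝ} (ha : 0 ≤ a) (n : ℕ) : BddBelow (SS a n) :=
  ⟨0, fun y hy => SS_nonneg ha y hy⟩

lemma seqA_nonneg {a : ℝ} (ha : 0 ≤ a) (n : ℕ) : 0 ≤ seqA a n :=
  Real.sInf_nonneg (SS_nonneg ha)

lemma rpow_pow_inv {c : ℝ} (hc : 0 ≤ c) {n : ℕ} (hn : 1 ≤ n) :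
    ((c ^ n : ℝ)) ^ ((1:ℝ)/n) = c := by
  have hn0 : (n:ℝ) ≠ 0 := by positivity
  rw [← Real.rpow_natCast c n, ← Real.rpow_mul hc]
  rw [mul_one_div, div_self hn0, Real.rpow_one]

lemma seqA_le {a : ℝ} (ha : 0 < a) {n : ℕ} (hn : 1 ≤ n) : seqA a n ≤ a := by
  refine le_trans (csInf_le (SS_bddBelow ha.le n)
    ⟨Polynomial.X ^ n, Polynomial.monic_X_pow n, Polynomial.natDegree_X_pow n, rfl⟩) ?_
  have h1 : nrm a (Polynomial.X ^ n) ≤ a ^ n := by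
    refine nrm_le ha.le _ fun x hx => ?_
    rw [map_pow, Polynomial.aeval_X, abs_pow, abs_of_nonneg hx.1]
    exact pow_le_pow_left₀ hx.1 hx.2 n
  calc (nrm a (Polynomial.X ^ n)) ^ ((1:ℝ)/n)
      ≤ (a ^ n : ℝ) ^ ((1:ℝ)/n) :=
        Real.rpow_le_rpow (nrm_nonneg ha.le _) h1 (by positivity)
    _ = a := rpow_pow_inv ha.le hn

lemma seqA_mono {a b : ℝ} (ha : 0 ≤ a) (hab : a ≤ b) (n : ℕ) :
    seqA a n ≤ seqA b n := by
  refine le_csInf (SS_nonempty b n) ?_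
  rintro y ⟨p, hm, hd, rfl⟩
  refine le_trans (csInf_le (SS_bddBelow ha n) ⟨p, hm, hd, rfl⟩) ?_
  exact Real.rpow_le_rpow (nrm_nonneg ha p) (nrm_mono ha hab p) (by positivity)

lemma seqA_compare {a b : ℝ} (ha : 0 < a) (hab : a ≤ b) {n : ℕ} (hn : 1 ≤ n) :
    seqA b n ≤ chebR (2 * b / a - 1) * seqA a n := by
  set K := chebR (2 * b / a - 1) with hK
  have hyb : (1:ℝ) ≤ 2 * b / a - 1 := by
    rw [le_sub_iff_add_le, le_div_iff₀ ha]; linarith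
  have hK1 : 1 ≤ K := one_le_chebR hyb
  have hK0 : 0 < K := lt_of_lt_of_le zero_lt_one hK1
  have key : ∀ y ∈ SS a n, seqA b n / K ≤ y := by
    rintro y ⟨p, hm, hd, rfl⟩
    rw [div_le_iff₀ hK0]
    have h1 : seqA b n ≤ (nrm b p) ^ ((1:ℝ)/n) :=
      csInf_le (SS_bddBelow (ha.le.trans hab) n) ⟨p, hm, hd, rfl⟩
    have h2 : (nrm b p) ^ ((1:ℝ)/n) ≤ (nrm a p * K ^ n) ^ ((1:ℝ)/n) :=
      Real.rpow_le_rpow (nrm_nonneg (ha.le.trans hab) p)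
        (nrm_le_nrm_mul ha hab hm hn hd) (by positivity)
    have h3 : (nrm a p * K ^ n : ℝ) ^ ((1:ℝ)/n)
        = (nrm a p) ^ ((1:ℝ)/n) * K := by
      rw [Real.mul_rpow (nrm_nonneg ha.le p) (by positivity),
        rpow_pow_inv hK0.le hn]
    exact h1.trans (h2.trans_eq h3)
  have h4 : seqA b n / K ≤ seqA a n := le_csInf (SS_nonempty a n) key
  rw [div_le_iff₀ hK0] at h4
  linarith

noncomputable def FF (a : ℝ) : ℝ := Filter.limsup (seqA a) Filter.atTop

lemma FF_cobdd {a : ℝ} (ha : 0 ≤ a) :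
    Filter.IsCoboundedUnder (· ≤ ·) Filter.atTop (seqA a) :=
  Filter.isCoboundedUnder_le_of_le Filter.atTop (x := 0) fun n => seqA_nonneg ha n

lemma FF_bddev {a : ℝ} (ha : 0 < a) :
    ∀ᶠ n in Filter.atTop, seqA a n ≤ max a 1 :=
  Filter.eventually_atTop.mpr ⟨1, fun n hn => (seqA_le ha hn).trans (le_max_left a 1)⟩

lemma FF_bdd {a : ℝ} (ha : 0 < a) :
    Filter.IsBoundedUnder (· ≤ ·) Filter.atTop (seqA a) :=
  Filter.isBoundedUnder_of_eventually_le (FF_bddev ha)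

lemma FF_nonneg {a : ℝ} (ha : 0 < a) : 0 ≤ FF a :=
  Filter.le_limsup_of_frequently_le
    (Filter.Frequently.of_forall fun n => seqA_nonneg ha.le n) (FF_bdd ha)

lemma FF_le {a : ℝ} (ha : 0 < a) : FF a ≤ max a 1 :=
  Filter.limsup_le_of_le (FF_cobdd ha.le) (FF_bddev ha)

lemma FF_mono {a b : ℝ} (ha : 0 < a) (hab : a ≤ b) : FF a ≤ FF b :=
  Filter.limsup_le_limsup (Filter.Eventually.of_forall fun n => seqA_mono ha.le hab n)
    (FF_cobdd ha.le) (FF_bdd (ha.trans_le hab))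

lemma FF_compare {a b : ℝ} (ha : 0 < a) (hab : a ≤ b) :
    FF b ≤ chebR (2 * b / a - 1) * FF a := by
  set K := chebR (2 * b / a - 1) with hK
  have hyb : (1:ℝ) ≤ 2 * b / a - 1 := by
    rw [le_sub_iff_add_le, le_div_iff₀ ha]; linarith
  have hK1 : 1 ≤ K := one_le_chebR hyb
  have hK0 : (0:ℝ) ≤ K := le_trans zero_le_one hK1
  have h1 : FF b ≤ Filter.limsup (fun n => K * seqA a n) Filter.atTop := by
    refine Filter.limsup_le_limsup ?_ (FF_cobdd (ha.le.trans hab)) ?_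
    · exact Filter.eventually_atTop.mpr ⟨1, fun n hn => seqA_compare ha hab hn⟩
    · refine Filter.isBoundedUnder_of_eventually_le (a := K * max a 1) ?_
      exact (FF_bddev ha).mono fun n hn => mul_le_mul_of_nonneg_left hn hK0
  have h2 : Filter.limsup (fun n => K * seqA a n) Filter.atTop = K * FF a := by
    have hmono : Monotone (fun z : ℝ => K * z) := fun u v huv =>
      mul_le_mul_of_nonneg_left huv hK0
    have hcont : ContinuousAt (fun z : ℝ => K * z) (FF a) :=
      (continuous_const.mul continuous_id).continuousAt
    exact (hmono.map_limsup_of_continuousAt (seqA a) hcont (FF_bdd ha)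
      (FF_cobdd ha.le)).symm
  exact h1.trans_eq h2

lemma mitd_eq (a : ℝ) : monicIntTransDiam (Set.Icc 0 a) = FF a := rfl

lemma chebR_continuous : Continuous chebR := by
  unfold chebR
  fun_prop

theorem monicIntTransDiam_continuousOn :
    ContinuousOn (fun x : ℝ => monicIntTransDiam (Set.Icc 0 x)) (Set.Ioi 0) := by
  intro x0 hx0
  rw [Set.mem_Ioi] at hx0
  refine ContinuousAt.continuousWithinAt ?_
  simp only [mitd_eq]
  rw [Metric.continuousAt_iff]
  intro ε hε
  set C : ℝ := max (2 * x0) 1 with hC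
  have hC1 : (1:ℝ) ≤ C := le_max_right _ _
  have hC0 : (0:ℝ) < C := lt_of_lt_of_le zero_lt_one hC1
  have hεC : 0 < ε / C := div_pos hε hC0
  -- continuity of the Chebyshev factor in both endpoints
  have kcont : ContinuousAt (fun q : ℝ × ℝ => chebR (2 * q.2 / q.1 - 1)) (x0, x0) := by
    refine chebR_continuous.continuousAt.comp ?_
    refine ContinuousAt.sub ?_ continuousAt_const
    exact (continuousAt_const.mul continuousAt_snd).div continuousAt_fst (by simpa using ne_of_gt hx0)
  have hk1 : chebR (2 * x0 / x0 - 1) = 1 := by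
    rw [mul_div_assoc, div_self (ne_of_gt hx0)]
    norm_num [chebR]
  have hev : ∀ᶠ q : ℝ × ℝ in nhds (x0, x0), chebR (2 * q.2 / q.1 - 1) < 1 + ε / C := by
    refine kcont.eventually_lt ?_ ?_
    · exact continuousAt_const
    · simpa [hk1] using by linarith
  rw [Metric.eventually_nhds_iff] at hev
  obtain ⟨δ1, hδ1, hball⟩ := hev
  refine ⟨min δ1 (x0 / 2), lt_min hδ1 (by linarith), ?_⟩
  intro x hx
  rw [lt_min_iff] at hx
  obtain ⟨hxδ1, hxhalf⟩ := hx
  rw [Real.dist_eq] at hxhalf hxδ1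
  set a : ℝ := min x x0 with ha
  set b : ℝ := max x x0 with hb
  have hapos : 0 < a := by
    rw [ha, lt_min_iff]
    constructor
    · cases abs_sub_lt_iff.mp hxhalf; linarith
    · exact hx0
  have hab : a ≤ b := min_le_max
  have hbC : b ≤ 2 * x0 := by
    rw [hb, max_le_iff]
    constructor
    · cases abs_sub_lt_iff.mp hxhalf; linarith
    · linarith
  have h1 : dist a x0 < δ1 := by
    rw [Real.dist_eq]
    rcases le_total x x0 with h | h
    · rw [ha, min_eq_left h]; exact hxδ1
    · rw [ha, min_eq_right h]; simpa using hδ1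
  have h2 : dist b x0 < δ1 := by
    rw [Real.dist_eq]
    rcases le_total x x0 with h | h
    · rw [hb, max_eq_right h]; simpa using hδ1
    · rw [hb, max_eq_left h]; exact hxδ1
  have hd : dist ((a, b) : ℝ × ℝ) ((x0, x0) : ℝ × ℝ) < δ1 := by
    rw [Prod.dist_eq, max_lt_iff]
    exact ⟨h1, h2⟩
  have hK := hball hd
  simp only at hK
  set K : ℝ := chebR (2 * b / a - 1) with hKdef
  have hyb : (1:ℝ) ≤ 2 * b / a - 1 := by
    rw [le_sub_iff_add_le, le_div_iff₀ hapos]; linarith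
  have hK1 : 1 ≤ K := one_le_chebR hyb
  -- monotonicity estimates
  have hax : a ≤ x := min_le_left _ _
  have hax0 : a ≤ x0 := min_le_right _ _
  have hxb : x ≤ b := le_max_left _ _
  have hx0b : x0 ≤ b := le_max_right _ _
  have hFa_x : FF a ≤ FF x := FF_mono hapos hax
  have hFa_x0 : FF a ≤ FF x0 := FF_mono hapos hax0
  have hFx_b : FF x ≤ FF b := FF_mono (hapos.trans_le hax) hxb
  have hFx0_b : FF x0 ≤ FF b := FF_mono hx0 hx0b
  have hFaC : FF a ≤ C := le_trans (FF_le hapos)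
    (max_le_max (hax.trans (hxb.trans hbC)) (le_refl 1))
  have hFa0 : 0 ≤ FF a := FF_nonneg hapos
  have hcore : FF b - FF a < ε := by
    have hcmp : FF b ≤ K * FF a := FF_compare hapos hab
    have e1 : (K - 1) * FF a ≤ (K - 1) * C :=
      mul_le_mul_of_nonneg_left hFaC (by linarith)
    have e2 : (K - 1) * C < (ε / C) * C := by
      refine mul_lt_mul_of_pos_right (by linarith) hC0
    have e3 : (ε / C) * C = ε := div_mul_cancel₀ ε (ne_of_gt hC0)
    nlinarith
  rw [Real.dist_eq, abs_sub_lt_iff]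
  constructor <;> linarith
end

section
/- Let q(x) = a_d x^d + ⋯ + a_0 be an irreducible integer polynomial with leading coefficient a_d > 1 and all roots in a closed finite interval I ⊂ ℝ. Then for every monic integer polynomial p of degree n, a_d^{−1/d} ≤ (sup_{x∈I}|p(x)|)^{1/n}. -/
open Polynomial

section ObstructionAux

lemma aux_no_common_root (q p : Polynomial ℤ) (hq_irr : Irreducible q)
    (hq_lead : 1 < q.leadingCoeff) (hd : 0 < q.natDegree) (hp : p.Monic)
    (z : ℂ) (hz : Polynomial.aeval z q = 0) : Polynomial.aeval z p ≠ 0 := by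
  intro hpz
  have hprim : q.IsPrimitive := by
    intro r hr
    obtain ⟨t, ht⟩ := hr
    rcases hq_irr.isUnit_or_isUnit ht with h | h
    · exact Polynomial.isUnit_C.mp h
    · exfalso
      have h1 : q.natDegree ≤ (C r).natDegree + t.natDegree := ht ▸ natDegree_mul_le
      rw [natDegree_C, Polynomial.natDegree_eq_zero_of_isUnit h] at h1
      omega
  have hqQ_irr : Irreducible (q.map (algebraMap ℤ ℚ)) :=
    (IsPrimitive.Int.irreducible_iff_irreducible_map_cast hprim).mp hq_irr
  have hdvd : q.map (algebraMap ℤ ℚ) ∣ p.map (algebraMap ℤ ℚ) := by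
    by_contra hnd
    have hco : IsCoprime (q.map (algebraMap ℤ ℚ)) (p.map (algebraMap ℤ ℚ)) :=
      (hqQ_irr.coprime_iff_not_dvd).mpr hnd
    obtain ⟨u, v, huv⟩ := hco
    have := congrArg (Polynomial.aeval z) huv
    simp only [map_add, map_mul, map_one, aeval_map_algebraMap, hz, hpz,
      mul_zero, add_zero, zero_add] at this
    exact zero_ne_one this
  have hdvd' : q ∣ p :=
    (IsPrimitive.Int.dvd_iff_map_cast_dvd_map_cast q p hprim).mpr hdvd
  obtain ⟨r, hr⟩ := hdvd'
  have hlc : q.leadingCoeff * r.leadingCoeff = 1 := by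
    have := congrArg Polynomial.leadingCoeff hr
    rw [hp.leadingCoeff, leadingCoeff_mul] at this
    exact this.symm
  have : q.leadingCoeff ≤ 1 := Int.le_of_dvd one_pos ⟨r.leadingCoeff, hlc.symm⟩
  omega

lemma aux_const_out (s : Multiset ℂ) (c : ℂ) (f : ℂ → ℂ) :
    (s.map (fun z => c * f z)).prod = c ^ Multiset.card s * (s.map f).prod := by
  rw [Multiset.prod_map_mul]
  congr 1
  rw [Multiset.map_const', Multiset.prod_replicate]

lemma aux_swap (f g : Polynomial ℂ) (hg : g.Monic) :
    ((g.roots).map f.eval).prod =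
      f.leadingCoeff ^ Multiset.card g.roots *
        ((-1 : ℂ) ^ Multiset.card g.roots) ^ Multiset.card f.roots *
        ((f.roots).map g.eval).prod := by
  have hsf : f = C f.leadingCoeff * (f.roots.map fun α => X - C α).prod :=
    (IsAlgClosed.splits f).eq_prod_roots
  have hsg : g = (g.roots.map fun α => X - C α).prod :=
    (IsAlgClosed.splits g).eq_prod_roots_of_monic hg
  have hfeq : ∀ z : ℂ, f.eval z = f.leadingCoeff * ((f.roots).map (fun α => z - α)).prod := by
    intro z
    conv_lhs => rw [hsf]
    rw [eval_mul, eval_C, eval_multiset_prod, Multiset.map_map]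
    simp
  have hgeq : ∀ z : ℂ, g.eval z = ((g.roots).map (fun α => z - α)).prod := by
    intro z
    conv_lhs => rw [hsg]
    rw [eval_multiset_prod, Multiset.map_map]
    simp
  calc ((g.roots).map f.eval).prod
      = ((g.roots).map (fun z => f.leadingCoeff * ((f.roots).map (fun α => z - α)).prod)).prod := by
        congr 1
        exact Multiset.map_congr rfl fun z _ => hfeq z
    _ = f.leadingCoeff ^ Multiset.card g.roots *
        ((g.roots).map (fun z => ((f.roots).map (fun α => z - α)).prod)).prod := by
        rw [aux_const_out]
    _ = f.leadingCoeff ^ Multiset.card g.roots *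
        ((f.roots).map (fun α => ((g.roots).map (fun z => z - α)).prod)).prod := by
        rw [Multiset.prod_map_prod_map]
    _ = f.leadingCoeff ^ Multiset.card g.roots *
        ((f.roots).map (fun α => (-1 : ℂ) ^ Multiset.card g.roots * g.eval α)).prod := by
        congr 2
        refine Multiset.map_congr rfl fun α _ => ?_
        have h1 : ((g.roots).map (fun z => z - α)) = ((g.roots).map (fun z => α - z)).map Neg.neg := by
          rw [Multiset.map_map]
          exact Multiset.map_congr rfl fun z _ => by simp [neg_sub]
        rw [h1, Multiset.prod_map_neg, Multiset.card_map, hgeq α]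
    _ = f.leadingCoeff ^ Multiset.card g.roots *
        ((-1 : ℂ) ^ Multiset.card g.roots) ^ Multiset.card f.roots *
        ((f.roots).map g.eval).prod := by
        rw [aux_const_out, mul_assoc]

lemma aux_irred_factor (q p : Polynomial ℤ) (hp : p.Monic)
    (g : Polynomial ℚ) (hg : Irreducible g) (hgm : g.Monic)
    (hgd : g ∣ p.map (algebraMap ℤ ℚ)) :
    ∃ m : ℤ, ((g.aroots ℂ).map (fun z => Polynomial.aeval z q)).prod = (m : ℂ) := by
  classical
  haveI : Fact (Irreducible g) := ⟨hg⟩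
  have hg0 : g ≠ 0 := hg.ne_zero
  set K := AdjoinRoot g
  let pb : PowerBasis ℚ K := AdjoinRoot.powerBasis hg0
  haveI := pb.finite
  haveI : FiniteDimensional ℚ K := pb.finite
  set β : K := AdjoinRoot.root g with hβ
  have hpbgen : pb.gen = β := AdjoinRoot.powerBasis_gen hg0
  have hmin : minpoly ℚ pb.gen = g := by
    rw [hpbgen]; exact AdjoinRoot.minpoly_powerBasis_gen_of_monic hgm
  -- β is integral over ℤ
  have hβint : IsIntegral ℤ β := by
    refine ⟨p, hp, ?_⟩
    rw [← Polynomial.aeval_def, ← Polynomial.aeval_map_algebraMap ℚ]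
    obtain ⟨c, hc⟩ := hgd
    rw [hc, map_mul, hβ]
    exact mul_eq_zero_of_left (AdjoinRoot.eval₂_root g) _
  set x : K := Polynomial.aeval β q with hx
  have hxint : IsIntegral ℤ x := by
    have hmem : x ∈ Algebra.adjoin ℤ ({β} : Set K) :=
      Polynomial.aeval_mem_adjoin_singleton ℤ β
    have hle : Algebra.adjoin ℤ ({β} : Set K) ≤ integralClosure ℤ K := by
      apply Algebra.adjoin_le
      simpa [mem_integralClosure_iff] using hβint
    exact hle hmem
  have hNint : IsIntegral ℤ (Algebra.norm ℚ x) := Algebra.isIntegral_norm ℚ hxint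
  obtain ⟨m, hm⟩ := IsIntegrallyClosed.isIntegral_iff.mp hNint
  refine ⟨m, ?_⟩
  have key : algebraMap ℚ ℂ (Algebra.norm ℚ x) = ∏ σ : K →ₐ[ℚ] ℂ, σ x :=
    Algebra.norm_eq_prod_embeddings ℚ ℂ x
  have step1 : ∏ σ : K →ₐ[ℚ] ℂ, σ x =
      ∏ y : { y : ℂ // y ∈ (minpoly ℚ pb.gen).aroots ℂ }, Polynomial.aeval (y : ℂ) q := by
    refine Fintype.prod_equiv pb.liftEquiv' _ _ fun σ => ?_
    rw [PowerBasis.liftEquiv'_apply_coe, hpbgen, hx]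
    exact (Polynomial.aeval_algHom_apply (σ.restrictScalars ℤ) β q).symm
  have hnodup : ((minpoly ℚ pb.gen).aroots ℂ).Nodup := by
    apply nodup_roots
    rw [hmin]
    exact (hg.separable).map
  have step2 : ∏ y : { y : ℂ // y ∈ (minpoly ℚ pb.gen).aroots ℂ }, Polynomial.aeval (y : ℂ) q =
      (((minpoly ℚ pb.gen).aroots ℂ).map (fun z => Polynomial.aeval z q)).prod := by
    rw [Finset.prod_mem_multiset _ _ (fun z => Polynomial.aeval z q) (fun _ => rfl),
      Finset.prod_eq_multiset_prod, Multiset.toFinset_val,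
      Multiset.dedup_eq_self.mpr hnodup]
  rw [← hmin, ← step2, ← step1, ← key, ← hm]
  simp

lemma aux_prod_int (q p : Polynomial ℤ) (hp : p.Monic) :
    ∀ N : ℕ, ∀ f : Polynomial ℚ, f.natDegree ≤ N → f.Monic → f ∣ p.map (algebraMap ℤ ℚ) →
      ∃ m : ℤ, ((f.aroots ℂ).map (fun z => Polynomial.aeval z q)).prod = (m : ℂ) := by
  intro N
  induction N with
  | zero =>
    intro f hdeg hf hfd
    have : f = 1 := hf.natDegree_eq_zero.mp (Nat.le_zero.mp hdeg)
    subst this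
    exact ⟨1, by simp⟩
  | succ N ih =>
    intro f hdeg hf hfd
    rcases Nat.eq_zero_or_pos f.natDegree with h0 | hpos
    · have : f = 1 := hf.natDegree_eq_zero.mp h0
      subst this
      exact ⟨1, by simp⟩
    · have hf0 : f ≠ 0 := hf.ne_zero
      have hfu : ¬ IsUnit f := by
        intro hu
        rw [Polynomial.isUnit_iff] at hu
        obtain ⟨c, -, hc⟩ := hu
        rw [← hc, natDegree_C] at hpos
        omega
      obtain ⟨i, hi_irr, hi_dvd⟩ := WfDvdMonoid.exists_irreducible_factor hfu hf0
      have hi0 : i ≠ 0 := hi_irr.ne_zero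
      set g : Polynomial ℚ := i * C (i.leadingCoeff)⁻¹ with hgdef
      have hgm : g.Monic := monic_mul_leadingCoeff_inv hi0
      have hassoc : Associated i g := by
        refine ⟨Units.mkOfMulEqOne _ (C i.leadingCoeff) ?_, rfl⟩
        rw [← C_mul, inv_mul_cancel₀ (leadingCoeff_ne_zero.mpr hi0), C_1]
      have hg_irr : Irreducible g := hassoc.irreducible hi_irr
      have hg_dvd_f : g ∣ f := (hassoc.symm.dvd).trans hi_dvd
      obtain ⟨h, hh⟩ := hg_dvd_f
      have hg0 : g ≠ 0 := hgm.ne_zero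
      have hh_monic : h.Monic := by
        have := congrArg leadingCoeff hh
        rw [hf.leadingCoeff, leadingCoeff_mul, hgm.leadingCoeff, one_mul] at this
        exact this.symm
      have hh0 : h ≠ 0 := hh_monic.ne_zero
      have hgpos : 0 < g.natDegree := by
        rcases Nat.eq_zero_or_pos g.natDegree with h0 | h; swap; · exact h
        exfalso
        have : g = 1 := hgm.natDegree_eq_zero.mp h0
        exact hg_irr.not_isUnit (this ▸ isUnit_one)
      have hhdeg : h.natDegree ≤ N := by
        have := congrArg natDegree hh
        rw [natDegree_mul hg0 hh0] at this
        omega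
      have hh_dvd : h ∣ p.map (algebraMap ℤ ℚ) := (Dvd.intro_left g hh.symm).trans hfd
      have hg_dvd : g ∣ p.map (algebraMap ℤ ℚ) := (Dvd.intro h hh.symm).trans hfd
      obtain ⟨m₁, hm₁⟩ := aux_irred_factor q p hp g hg_irr hgm hg_dvd
      obtain ⟨m₂, hm₂⟩ := ih h hhdeg hh_monic hh_dvd
      refine ⟨m₁ * m₂, ?_⟩
      rw [hh, aroots_mul (by rw [← hh]; exact hf0), Multiset.map_add, Multiset.prod_add,
        hm₁, hm₂]
      push_cast
      ring

lemma aux_prod_le (s : Multiset ℝ) (S : ℝ) (h : ∀ x ∈ s, 0 ≤ x ∧ x ≤ S) :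
    s.prod ≤ S ^ Multiset.card s := by
  induction s using Multiset.induction with
  | empty => simp
  | cons a s ih =>
    rw [Multiset.prod_cons, Multiset.card_cons, pow_succ']
    have ha := h a (Multiset.mem_cons_self a s)
    have hs : ∀ x ∈ s, 0 ≤ x ∧ x ≤ S := fun x hx => h x (Multiset.mem_cons_of_mem hx)
    have hS : 0 ≤ S := le_trans ha.1 ha.2
    exact mul_le_mul ha.2 (ih hs) (Multiset.prod_nonneg fun x hx => (hs x hx).1)
      hS

end ObstructionAux

theorem obstruction_lemma (a b : ℝ) (hab : a ≤ b) (q : Polynomial ℤ)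
    (hq_irr : Irreducible q) (hq_lead : 1 < q.leadingCoeff) (hd : 0 < q.natDegree)
    (hq_roots : ∀ z : ℂ, Polynomial.aeval z q = 0 → z.im = 0 ∧ z.re ∈ Set.Icc a b)
    (n : ℕ) (p : Polynomial ℤ) (hp : p.Monic) (hpn : p.natDegree = n) :
    (q.leadingCoeff : ℝ) ^ (-(1 : ℝ) / q.natDegree) ≤
      (⨆ x : Set.Icc a b, |Polynomial.aeval (x : ℝ) p|) ^ ((1 : ℝ) / n) := by
  classical
  set d := q.natDegree with hddef
  set A : ℝ := (q.leadingCoeff : ℝ) with hAdef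
  have hA1 : (1 : ℝ) < A := by rw [hAdef]; exact_mod_cast hq_lead
  have hA0 : (0 : ℝ) < A := lt_trans one_pos hA1
  set S : ℝ := ⨆ x : Set.Icc a b, |Polynomial.aeval (x : ℝ) p| with hSdef
  -- handle n = 0 first
  rcases Nat.eq_zero_or_pos n with hn0 | hnpos
  · subst hn0
    rw [Nat.cast_zero, div_zero, Real.rpow_zero]
    apply Real.rpow_le_one_of_one_le_of_nonpos hA1.le
    apply div_nonpos_of_nonpos_of_nonneg (by norm_num)
    positivity
  -- basic setup
  set qc : Polynomial ℂ := q.map (algebraMap ℤ ℂ) with hqc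
  set pc : Polynomial ℂ := p.map (algebraMap ℤ ℂ) with hpc
  have hinj : Function.Injective (algebraMap ℤ ℂ) := Int.cast_injective
  have hq0 : q ≠ 0 := hq_irr.ne_zero
  have hpcm : pc.Monic := hp.map _
  have hqc0 : qc ≠ 0 := by
    rw [hqc, Ne, Polynomial.map_eq_zero_iff hinj]
    exact hq0
  have hqclead : qc.leadingCoeff = (q.leadingCoeff : ℂ) := leadingCoeff_map_of_injective hinj q
  have hqcdeg : qc.natDegree = d := natDegree_map_eq_of_injective hinj q
  have hpcdeg : pc.natDegree = n := by rw [hpc, natDegree_map_eq_of_injective hinj p, hpn]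
  have hqroots_card : Multiset.card qc.roots = d := by
    rw [splits_iff_card_roots.mp (IsAlgClosed.splits _), hqcdeg]
  have hproots_card : Multiset.card pc.roots = n := by
    rw [splits_iff_card_roots.mp (IsAlgClosed.splits _), hpcdeg]
  have haeq : ∀ z : ℂ, Polynomial.aeval z q = qc.eval z := fun z => by
    rw [Polynomial.aeval_def, Polynomial.eval₂_eq_eval_map]
  have haep : ∀ z : ℂ, Polynomial.aeval z p = pc.eval z := fun z => by
    rw [Polynomial.aeval_def, Polynomial.eval₂_eq_eval_map]
  -- the integer M
  have hpQmonic : (p.map (algebraMap ℤ ℚ)).Monic := hp.map _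
  obtain ⟨m, hm⟩ := aux_prod_int q p hp ((p.map (algebraMap ℤ ℚ)).natDegree)
    (p.map (algebraMap ℤ ℚ)) le_rfl hpQmonic dvd_rfl
  have haroots_eq : (p.map (algebraMap ℤ ℚ)).aroots ℂ = pc.roots := by
    rw [Polynomial.aroots_def, Polynomial.map_map, ← IsScalarTower.algebraMap_eq]
  rw [haroots_eq] at hm
  -- m ≠ 0
  have hm0 : m ≠ 0 := by
    intro h0
    rw [h0, Int.cast_zero] at hm
    have ht : (0 : ℂ) ∈ Multiset.map (fun z => Polynomial.aeval z q) pc.roots :=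
      Multiset.prod_eq_zero_iff.mp hm
    obtain ⟨z, hz, hz0⟩ := Multiset.mem_map.mp ht
    have hzp : Polynomial.aeval z p = 0 := by
      rw [haep]
      exact (Polynomial.mem_roots hpcm.ne_zero).mp hz
    exact aux_no_common_root q p hq_irr hq_lead hd hp z hz0 hzp
  -- swap identity and absolute values
  have hmval : (Multiset.map qc.eval pc.roots).prod = (m : ℂ) := by
    rw [← hm]
    congr 1
    exact Multiset.map_congr rfl fun z _ => (haeq z).symm
  set P : ℝ := (Multiset.map (fun z => ‖pc.eval z‖) qc.roots).prod with hPdef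
  have key1 : |(m : ℝ)| = A ^ n * P := by
    have h1 := congrArg (normHom (α := ℂ)) hmval
    rw [aux_swap qc pc hpcm, hqroots_card, hproots_card] at h1
    rw [map_mul, map_mul, map_pow, map_pow, map_pow, map_multiset_prod,
      Multiset.map_map] at h1
    simp only [normHom_apply, Function.comp_def, norm_neg, norm_one, one_pow, mul_one, hqclead,
      Complex.norm_intCast] at h1
    rw [← h1, abs_of_pos hA0]
  have hm1 : (1 : ℝ) ≤ |(m : ℝ)| := by
    have : (1 : ℤ) ≤ |m| := Int.one_le_abs hm0
    calc (1:ℝ) ≤ ((|m| : ℤ) : ℝ) := by exact_mod_cast this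
    _ = |(m:ℝ)| := by push_cast; ring
  -- sup bounds
  have hrange : (Set.range fun x : Set.Icc a b => |Polynomial.aeval (x : ℝ) p|) =
      (fun x : ℝ => |Polynomial.aeval x p|) '' Set.Icc a b := by
    rw [show (fun x : Set.Icc a b => |Polynomial.aeval (x : ℝ) p|) =
      (fun x : ℝ => |Polynomial.aeval x p|) ∘ Subtype.val from rfl, Set.range_comp,
      Subtype.range_coe]
  have hbdd : BddAbove (Set.range fun x : Set.Icc a b => |Polynomial.aeval (x : ℝ) p|) := by
    rw [hrange]
    exact (isCompact_Icc.image_of_continuousOn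
      ((p.continuous_aeval).abs.continuousOn)).bddAbove
  have hle : ∀ x ∈ Set.Icc a b, |Polynomial.aeval x p| ≤ S := fun x hx =>
    le_ciSup hbdd (⟨x, hx⟩ : Set.Icc a b)
  have hS0 : 0 ≤ S := le_trans (abs_nonneg _) (hle a ⟨le_refl a, hab⟩)
  have hfac : ∀ t ∈ Multiset.map (fun z => ‖pc.eval z‖) qc.roots,
      0 ≤ t ∧ t ≤ S := by
    intro t ht
    obtain ⟨z, hz, rfl⟩ := Multiset.mem_map.mp ht
    refine ⟨norm_nonneg _, ?_⟩
    have hzq : Polynomial.aeval z q = 0 := by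
      rw [haeq]
      exact (Polynomial.mem_roots hqc0).mp hz
    obtain ⟨him, hre⟩ := hq_roots z hzq
    have hz' : z = ((z.re : ℝ) : ℂ) := by
      apply Complex.ext <;> simp [him]
    have hev : pc.eval z = ((Polynomial.aeval z.re p : ℝ) : ℂ) := by
      rw [← haep]
      conv_lhs => rw [hz']
      rw [show ((z.re : ℝ) : ℂ) = algebraMap ℝ ℂ z.re from rfl,
        Polynomial.aeval_algebraMap_apply]
      rfl
    rw [hev, Complex.norm_real]
    exact hle z.re hre
  have hPle : P ≤ S ^ d := by
    have := aux_prod_le _ S hfac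
    rwa [Multiset.card_map, hqroots_card] at this
  have hmain : (1 : ℝ) ≤ A ^ n * S ^ d := by
    calc (1:ℝ) ≤ |(m:ℝ)| := hm1
    _ = A ^ n * P := key1
    _ ≤ A ^ n * S ^ d := mul_le_mul_of_nonneg_left hPle (pow_nonneg hA0.le n)
  -- rpow manipulations
  have hdne : (d : ℝ) ≠ 0 := Nat.cast_ne_zero.mpr ((by omega))
  have hnne : (n : ℝ) ≠ 0 := Nat.cast_ne_zero.mpr ((by omega))
  have hAn : A ^ (-(n : ℝ)) ≤ S ^ (d : ℝ) := by
    rw [Real.rpow_neg hA0.le, Real.rpow_natCast, Real.rpow_natCast, inv_eq_one_div,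
      div_le_iff₀ (pow_pos hA0 n)]
    nlinarith [hmain]
  have h2 : A ^ (-(n : ℝ) / (d : ℝ)) ≤ S := by
    have := Real.rpow_le_rpow (Real.rpow_nonneg hA0.le _) hAn
      (le_of_lt (by positivity : (0:ℝ) < 1 / (d:ℝ)))
    rwa [← Real.rpow_mul hA0.le, ← Real.rpow_mul hS0, mul_one_div, mul_one_div,
      div_self hdne, Real.rpow_one] at this
  have h3 := Real.rpow_le_rpow (Real.rpow_nonneg hA0.le _) h2
    (le_of_lt (by positivity : (0:ℝ) < 1 / (n:ℝ)))
  rw [← Real.rpow_mul hA0.le] at h3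
  have hexp : -(n : ℝ) / (d : ℝ) * (1 / (n : ℝ)) = -(1 : ℝ) / (d : ℝ) := by
    field_simp
  rwa [hexp] at h3
end

section
/- For every integer n > 1, t_M([0, 1/n]) = 1/n. -/
/-! At `1/n` every monic integer polynomial `p` of degree `m` satisfies
`n^m p(1/n) = (reverse p)(n) ≡ 1 (mod n)`, a nonzero integer, so `|p(1/n)| ≥ n^{-m}` and the
`m`-th root of `‖p‖` on `[0, 1/n]` is at least `1/n`. The polynomial `X^m` attains this bound. -/

open Polynomial Filter

namespace Polynomial

theorem aeval_inv_eq_eval_reverse_mul_pow {K : Type*} [Field K] [CharZero K] (p : ℤ[X]) {a : ℤ}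
    (ha : a ≠ 0) :
    aeval (a : K)⁻¹ p = ((p.reverse.eval a : ℤ) : K) * ((a : K)⁻¹) ^ p.natDegree := by
  have : Invertible ((a : K)⁻¹) := invertibleOfNonzero (inv_ne_zero (Int.cast_ne_zero.2 ha))
  rw [aeval_def, ← eval₂_reverse_mul_pow, invOf_eq_inv, inv_inv, eval₂_at_intCast]
  rfl

theorem dvd_eval_reverse_sub_leadingCoeff {R : Type*} [CommRing R] (p : R[X]) (a : R) :
    a ∣ p.reverse.eval a - p.leadingCoeff := by
  simpa [← coeff_zero_eq_eval_zero] using sub_dvd_eval_sub a 0 p.reverse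

theorem abs_inv_pow_natDegree_le_abs_aeval_inv (p : ℤ[X]) {a : ℤ} (ha : a ≠ 0)
    (hp : ¬ a ∣ p.leadingCoeff) : |(a : ℝ)|⁻¹ ^ p.natDegree ≤ |aeval (a : ℝ)⁻¹ p| := by
  have hrev : p.reverse.eval a ≠ 0 := fun h ↦
    hp (by simpa [h] using dvd_eval_reverse_sub_leadingCoeff p a)
  have hrev_abs : (1 : ℝ) ≤ |((p.reverse.eval a : ℤ) : ℝ)| := by
    exact_mod_cast Int.one_le_abs hrev
  rw [aeval_inv_eq_eval_reverse_mul_pow p ha, abs_mul, abs_pow, abs_inv]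
  exact le_mul_of_one_le_left (by positivity) hrev_abs

end Polynomial

def monicIntRootNorms (I : Set ℝ) (m : ℕ) : Set ℝ :=
  {y | ∃ p : ℤ[X], p.Monic ∧ p.natDegree = m ∧ y = (⨆ x : I, |aeval (x : ℝ) p|) ^ ((1 : ℝ) / m)}

theorem monicIntTransDiam_eq_limsup (I : Set ℝ) :
    monicIntTransDiam I = limsup (fun m ↦ sInf (monicIntRootNorms I m)) atTop :=
  rfl

theorem abs_aeval_le_iSup_of_isCompact {I : Set ℝ} (hI : IsCompact I) (p : ℤ[X]) {x : ℝ}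
    (hx : x ∈ I) : |aeval x p| ≤ ⨆ y : I, |aeval (y : ℝ) p| := by
  have hbdd := hI.bddAbove_image (p.continuous_aeval.abs.continuousOn)
  rw [Set.image_eq_range] at hbdd
  exact le_ciSup hbdd ⟨x, hx⟩

theorem iSup_Icc_zero_abs_pow {c : ℝ} (hc : 0 ≤ c) (m : ℕ) :
    ⨆ x : Set.Icc 0 c, |(x : ℝ) ^ m| = c ^ m := by
  refine IsGreatest.csSup_eq ⟨⟨⟨c, le_rfl.trans' hc, le_rfl⟩, by simp [abs_of_nonneg hc]⟩, ?_⟩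
  rintro _ ⟨⟨x, hx0, hxc⟩, rfl⟩
  simpa [abs_of_nonneg hx0] using pow_le_pow_left₀ hx0 hxc m

theorem isLeast_monicIntRootNorms_Icc_inv {n m : ℕ} (hn : 1 < n) (hm : m ≠ 0) :
    IsLeast (monicIntRootNorms (Set.Icc 0 (1 / (n : ℝ))) m) (1 / n) := by
  have hn0 : (0 : ℝ) ≤ 1 / n := by positivity
  have root_pow : ((1 / (n : ℝ)) ^ m) ^ ((1 : ℝ) / m) = 1 / n := by
    rw [one_div (m : ℝ), Real.pow_rpow_inv_natCast hn0 hm]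
  constructor
  · refine ⟨X ^ m, monic_X_pow m, natDegree_X_pow m, ?_⟩
    simp only [map_pow, aeval_X, iSup_Icc_zero_abs_pow hn0, root_pow]
  · rintro _ ⟨p, hp, rfl, rfl⟩
    have hval : (1 / (n : ℝ)) ^ p.natDegree ≤ |aeval (1 / (n : ℝ)) p| := by
      have := abs_inv_pow_natDegree_le_abs_aeval_inv p (a := n) (by omega)
        (by rw [hp.leadingCoeff]; exact_mod_cast Nat.dvd_one.not.2 hn.ne')
      simpa using this
    have hsup := hval.trans (abs_aeval_le_iSup_of_isCompact isCompact_Icc p ⟨hn0, le_rfl⟩)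
    calc 1 / (n : ℝ) = ((1 / (n : ℝ)) ^ p.natDegree) ^ ((1 : ℝ) / p.natDegree) := root_pow.symm
      _ ≤ _ := Real.rpow_le_rpow (by positivity) hsup (by positivity)

theorem monicIntTransDiam_Icc_inv (n : ℕ) (hn : 1 < n) :
    monicIntTransDiam (Set.Icc 0 (1 / (n : ℝ))) = 1 / (n : ℝ) := by
  rw [monicIntTransDiam_eq_limsup]
  calc limsup (fun m ↦ sInf (monicIntRootNorms (Set.Icc 0 (1 / (n : ℝ))) m)) atTop
      = limsup (fun _ ↦ 1 / (n : ℝ)) atTop := limsup_congr <|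
        (eventually_ne_atTop 0).mono fun m hm ↦ (isLeast_monicIntRootNorms_Icc_inv hn hm).csInf_eq
    _ = 1 / n := limsup_const _
end

section
/- t_M([0,1]) = 1/2. -/
open Polynomial Filter Real

/-- The obstruction: a monic integer polynomial of degree `n` is at least `2⁻ⁿ`
in absolute value at `1/2`. -/
lemma aeval_half_lower {p : Polynomial ℤ} {n : ℕ} (hm : p.Monic) (hd : p.natDegree = n) :
    ((2:ℝ)^n)⁻¹ ≤ |Polynomial.aeval (1/2 : ℝ) p| := by
  set m : ℤ := ∑ i ∈ Finset.range (n+1), p.coeff i * 2^(n-i) with hmdef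
  have hodd : Odd m := by
    rw [hmdef, Finset.sum_range_succ]
    have hlast : p.coeff n * 2^(n-n) = 1 := by
      rw [← hd, hm.coeff_natDegree]; simp
    rw [hlast]
    refine Even.add_one ?_
    refine Finset.even_sum _ (fun i hi => ?_)
    have hi' : i < n := Finset.mem_range.1 hi
    have : Even ((2:ℤ)^(n-i)) := (Int.even_pow).2 ⟨even_two, by omega⟩
    exact this.mul_left _
  have hm1 : (1:ℝ) ≤ |(m:ℝ)| := by
    have : m ≠ 0 := by
      intro h; rw [h] at hodd; exact (Int.not_odd_iff_even.2 Even.zero) hodd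
    have : (1:ℤ) ≤ |m| := Int.one_le_abs this
    calc (1:ℝ) = ((1:ℤ):ℝ) := by norm_num
    _ ≤ ((|m|:ℤ):ℝ) := by exact_mod_cast this
    _ = |(m:ℝ)| := by push_cast; ring
  have hcast : (m:ℝ) = 2^n * Polynomial.aeval (1/2:ℝ) p := by
    rw [Polynomial.aeval_def, Polynomial.eval₂_eq_sum_range, hd, Finset.mul_sum, hmdef]
    push_cast
    refine Finset.sum_congr rfl (fun i hi => ?_)
    have hi' : i ≤ n := by
      have := Finset.mem_range.1 hi; omega
    have h2 : (2:ℝ)^(n-i) * 2^i = 2^n := by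
      rw [← pow_add]; congr 1; omega
    have hne : ((2:ℝ))^i ≠ 0 := by positivity
    field_simp
    linear_combination ((p.coeff i : ℝ)) * (1/2:ℝ)^i * h2 - (p.coeff i : ℝ) * 2^(n-i) * (by rw [← mul_pow]; norm_num : ((1:ℝ)/2)^i * 2^i = 1)
  have h2n : (0:ℝ) < 2^n := by positivity
  rw [hcast, abs_mul, abs_of_pos h2n] at hm1
  rw [inv_le_iff_one_le_mul₀ h2n]
  linarith
lemma sqrt_quarter : (1/4:ℝ) ^ ((1:ℝ)/2) = 1/2 := by
  rw [show (1/4:ℝ) = (1/2)^(2:ℕ) by norm_num, ← Real.rpow_natCast ((1:ℝ)/2) 2,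
    ← Real.rpow_mul (by norm_num)]
  norm_num

theorem monicIntTransDiam_unitInterval :
    monicIntTransDiam (Set.Icc (0 : ℝ) 1) = 1 / 2 := by
  classical
  haveI : Nonempty (Set.Icc (0:ℝ) 1) := ⟨⟨0, by norm_num, by norm_num⟩⟩
  set f : ℕ → ℝ := fun n =>
    sInf {y : ℝ | ∃ p : Polynomial ℤ, p.Monic ∧ p.natDegree = n ∧
      y = (⨆ x : (Set.Icc (0:ℝ) 1), |Polynomial.aeval (x : ℝ) p|) ^ ((1 : ℝ) / n)} with hf
  set h : ℕ → ℝ := fun n => (1/4:ℝ) ^ (((n:ℝ)-1)/(2*n)) with hh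
  -- boundedness of sup
  have hbdd : ∀ p : Polynomial ℤ,
      BddAbove (Set.range fun x : (Set.Icc (0:ℝ) 1) => |Polynomial.aeval (x:ℝ) p|) := by
    intro p
    have hc : ContinuousOn (fun x : ℝ => |Polynomial.aeval x p|) (Set.Icc 0 1) :=
      (Polynomial.continuous_aeval p).abs.continuousOn
    have := (isCompact_Icc.image_of_continuousOn hc).bddAbove
    rwa [Set.image_eq_range] at this
  have hsup_nonneg : ∀ p : Polynomial ℤ,
      0 ≤ ⨆ x : (Set.Icc (0:ℝ) 1), |Polynomial.aeval (x:ℝ) p| :=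
    fun p => Real.iSup_nonneg (fun x => abs_nonneg _)
  -- lower bound
  have hlow : ∀ n : ℕ, 1 ≤ n → (1/2 : ℝ) ≤ f n := by
    intro n hn
    refine le_csInf ⟨(⨆ x : (Set.Icc (0:ℝ) 1), |Polynomial.aeval (x:ℝ) (X^n)|) ^ ((1:ℝ)/n),
      X^n, monic_X_pow n, natDegree_X_pow n, rfl⟩ ?_
    rintro y ⟨p, hm, hd, rfl⟩
    have hkey : ((2:ℝ)^n)⁻¹ ≤ ⨆ x : (Set.Icc (0:ℝ) 1), |Polynomial.aeval (x:ℝ) p| := by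
      refine le_trans (aeval_half_lower hm hd) ?_
      exact le_ciSup (hbdd p) ⟨1/2, by norm_num, by norm_num⟩
    have h0 : (0:ℝ) ≤ ((2:ℝ)^n)⁻¹ := by positivity
    have := Real.rpow_le_rpow h0 hkey (by positivity : (0:ℝ) ≤ (1:ℝ)/n)
    refine le_trans (le_of_eq ?_) this
    rw [← Real.rpow_natCast (2:ℝ) n, ← Real.rpow_neg (by norm_num),
      ← Real.rpow_mul (by norm_num)]
    rw [show -(n:ℝ) * ((1:ℝ)/n) = -1 by field_simp]
    rw [Real.rpow_neg_one]; norm_num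
  -- upper bound
  have hup : ∀ n : ℕ, 1 ≤ n → f n ≤ h n := by
    intro n hn
    set p : Polynomial ℤ := (X * (X - C 1))^(n/2) * X^(n%2) with hp
    have hmonic : p.Monic := ((monic_X.mul (monic_X_sub_C 1)).pow _).mul (monic_X_pow _)
    have hdeg : p.natDegree = n := by
      rw [hp, Monic.natDegree_mul ((monic_X.mul (monic_X_sub_C 1)).pow _) (monic_X_pow _),
        Monic.natDegree_pow (monic_X.mul (monic_X_sub_C 1)),
        Monic.natDegree_mul monic_X (monic_X_sub_C 1), natDegree_X, natDegree_X_sub_C,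
        natDegree_X_pow]
      omega
    have hsup_le : (⨆ x : (Set.Icc (0:ℝ) 1), |Polynomial.aeval (x:ℝ) p|) ≤ (1/4:ℝ)^(n/2) := by
      refine ciSup_le (fun x => ?_)
      obtain ⟨x, hx0, hx1⟩ := x
      simp only [hp, map_mul, map_pow, map_sub, Polynomial.aeval_X, Polynomial.aeval_C,
        map_one]
      rw [abs_mul, abs_pow, abs_pow]
      have h1 : |x * (x - 1)| ≤ 1/4 := by
        rw [abs_le]; constructor <;> nlinarith [sq_nonneg (x - 1/2)]
      have h2 : |x| ≤ 1 := by rw [abs_le]; constructor <;> linarith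
      calc |x * (x-1)|^(n/2) * |x|^(n%2)
          ≤ (1/4:ℝ)^(n/2) * 1^(n%2) :=
            mul_le_mul (pow_le_pow_left₀ (abs_nonneg _) h1 _)
              (pow_le_pow_left₀ (abs_nonneg _) h2 _) (by positivity) (by positivity)
      _ = (1/4:ℝ)^(n/2) := by simp
    have hy_mem : ((⨆ x : (Set.Icc (0:ℝ) 1), |Polynomial.aeval (x:ℝ) p|) ^ ((1:ℝ)/n))
        ∈ {y : ℝ | ∃ q : Polynomial ℤ, q.Monic ∧ q.natDegree = n ∧
          y = (⨆ x : (Set.Icc (0:ℝ) 1), |Polynomial.aeval (x : ℝ) q|) ^ ((1 : ℝ) / n)} :=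
      ⟨p, hmonic, hdeg, rfl⟩
    have hbddBelow : BddBelow {y : ℝ | ∃ q : Polynomial ℤ, q.Monic ∧ q.natDegree = n ∧
        y = (⨆ x : (Set.Icc (0:ℝ) 1), |Polynomial.aeval (x : ℝ) q|) ^ ((1 : ℝ) / n)} := by
      refine ⟨0, ?_⟩
      rintro y ⟨q, _, _, rfl⟩
      exact Real.rpow_nonneg (hsup_nonneg q) _
    refine le_trans (csInf_le hbddBelow hy_mem) ?_
    have hstep : (⨆ x : (Set.Icc (0:ℝ) 1), |Polynomial.aeval (x:ℝ) p|) ^ ((1:ℝ)/n)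
        ≤ ((1/4:ℝ)^(n/2)) ^ ((1:ℝ)/n) :=
      Real.rpow_le_rpow (hsup_nonneg p) hsup_le (by positivity)
    refine le_trans hstep ?_
    rw [← Real.rpow_natCast (1/4:ℝ) (n/2), ← Real.rpow_mul (by norm_num)]
    refine Real.rpow_le_rpow_of_exponent_ge (by norm_num) (by norm_num) ?_
    have hn' : (0:ℝ) < n := by exact_mod_cast hn
    have hdm : (n:ℝ) - 1 ≤ 2 * ((n/2 : ℕ):ℝ) := by
      have : n ≤ 2 * (n/2) + 1 := by omega
      have := (Nat.cast_le (α := ℝ)).2 this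
      push_cast at this ⊢
      linarith
    rw [div_le_iff₀ (by positivity)]
    have heq : ((n/2:ℕ):ℝ) * ((1:ℝ)/n) * (2*n) = 2 * ((n/2:ℕ):ℝ) := by
      field_simp
    rw [heq]
    exact hdm
  -- tendsto of h
  have hhtend : Tendsto h atTop (nhds (1/2 : ℝ)) := by
    have hexp : Tendsto (fun n : ℕ => ((n:ℝ)-1)/(2*n)) atTop (nhds ((1:ℝ)/2)) := by
      have h1 : Tendsto (fun n : ℕ => (1:ℝ)/2 - (1/2) * (1/n)) atTop
          (nhds ((1:ℝ)/2 - (1/2) * 0)) :=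
        tendsto_const_nhds.sub (tendsto_one_div_atTop_nhds_zero_nat.const_mul _)
      rw [mul_zero, sub_zero] at h1
      refine h1.congr' ?_
      filter_upwards [eventually_ge_atTop 1] with n hn
      have hn' : (0:ℝ) < n := by exact_mod_cast hn
      field_simp
    have hc : ContinuousAt (fun t : ℝ => (1/4:ℝ) ^ t) ((1:ℝ)/2) :=
      Real.continuousAt_const_rpow (by norm_num)
    have := hc.tendsto.comp hexp
    rw [sqrt_quarter] at this
    exact this
  -- squeeze
  have hftend : Tendsto f atTop (nhds (1/2 : ℝ)) := by
    refine tendsto_of_tendsto_of_tendsto_of_le_of_le' tendsto_const_nhds hhtend ?_ ?_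
    · filter_upwards [eventually_ge_atTop 1] with n hn using hlow n hn
    · filter_upwards [eventually_ge_atTop 1] with n hn using hup n hn
  exact hftend.limsup_eq
end

section
/- For integer n > 2, the polynomial P_n(x) = x^{n²−2}(x² − nx + 1) satisfies |P_n(1/n + 1/(n²(n−1)))| < (1/n)^{n²}. -/
set_option maxHeartbeats 1000000

theorem Pn_value_lt (n : ℕ) (hn : 2 < n) :
    |(1 / (n : ℝ) + 1 / ((n : ℝ) ^ 2 * ((n : ℝ) - 1))) ^ (n ^ 2 - 2) *
        ((1 / (n : ℝ) + 1 / ((n : ℝ) ^ 2 * ((n : ℝ) - 1))) ^ 2 -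
          (n : ℝ) * (1 / (n : ℝ) + 1 / ((n : ℝ) ^ 2 * ((n : ℝ) - 1))) + 1)| <
      (1 / (n : ℝ)) ^ (n ^ 2) := by
  have hn3 : (3:ℝ) ≤ (n:ℝ) := by exact_mod_cast hn
  set m : ℝ := (n:ℝ) with hm
  have hm0 : 0 < m := by linarith
  have hm1 : 0 < m - 1 := by linarith
  have h9 : 9 ≤ n^2 := by nlinarith
  have hK : n^2 - 2 + 2 = n^2 := by omega
  set K : ℕ := n^2 - 2 with hKdef
  have hKle : (K:ℝ) ≤ m^2 := by
    have h1 : (K:ℝ) ≤ ((n^2 : ℕ) : ℝ) := by exact_mod_cast Nat.sub_le _ _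
    have h2 : ((n^2 : ℕ) : ℝ) = m^2 := by push_cast [hm]; ring
    linarith
  set t : ℝ := 1/(m*(m-1)) with ht
  set ε : ℝ := 1/(m^2*(m-1)) with he
  set x : ℝ := 1/m + ε with hx
  have ht0 : 0 < t := by positivity
  have he0 : 0 < ε := by positivity
  have hx0 : 0 < x := by positivity
  have hxeq : x = (1+t) * (1/m) := by
    rw [hx, ht, he]; field_simp
  have hq : x^2 - m*x + 1 = -(ε * (1 - 2/m - ε)) := by
    rw [hx, he]; field_simp; ring
  have hfac : 0 < 1 - 2/m - ε := by
    have hnum : 0 < m^3 - 3*m^2 + 2*m - 1 := by nlinarith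
    have hid : 1 - 2/m - ε = (m^3 - 3*m^2 + 2*m - 1)/(m^2*(m-1)) := by
      rw [he]; field_simp; ring
    rw [hid]; positivity
  rw [hq, abs_mul, abs_neg, abs_of_pos (by positivity : (0:ℝ) < x^K),
    abs_of_pos (mul_pos he0 hfac)]
  have step1 : x^K * (ε * (1 - 2/m - ε)) < x^K * (ε * (1 - 2/m)) := by
    apply mul_lt_mul_of_pos_left _ (by positivity)
    apply mul_lt_mul_of_pos_left _ he0
    linarith
  have hA : (1+t)^K ≤ 9/2 := by
    have h1 : (1+t)^K ≤ Real.exp t ^ K := by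
      apply pow_le_pow_left₀ (by positivity)
      linarith [Real.add_one_le_exp t]
    have h2 : Real.exp t ^ K = Real.exp (K * t) := by
      rw [← Real.exp_nat_mul]
    have h3 : (K:ℝ) * t ≤ 3/2 := by
      have hKt : (K:ℝ) * t ≤ m^2 * t := mul_le_mul_of_nonneg_right hKle ht0.le
      have h32 : m^2 * t ≤ 3/2 := by
        rw [ht, mul_one_div, div_le_div_iff₀ (by positivity) (by norm_num)]
        nlinarith
      linarith
    have h4 : Real.exp ((K:ℝ)*t) ≤ Real.exp (3/2) := Real.exp_le_exp.2 h3
    have hsq : Real.exp (3/2) * Real.exp (3/2) = Real.exp 3 := by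
      rw [← Real.exp_add]; norm_num
    have hcube : Real.exp 1 ^ (3:ℕ) = Real.exp 3 := by
      rw [← Real.exp_nat_mul]; norm_num
    have he1 : Real.exp 1 < 2.7182818286 := Real.exp_one_lt_d9
    have hp1 := Real.exp_pos 1
    have hsq1 : Real.exp 1 ^ 2 < 2.7182818286 ^ 2 := by nlinarith
    have hcb : Real.exp 1 ^ 3 < 2.7182818286 ^ 3 := by nlinarith
    have h3lt : Real.exp 3 < 20.25 := by rw [← hcube]; nlinarith
    have h5 : Real.exp (3/2) < 9/2 := by
      nlinarith [Real.exp_pos (3/2:ℝ), hsq]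
    calc (1+t)^K ≤ Real.exp t ^ K := h1
      _ = Real.exp (K*t) := h2
      _ ≤ Real.exp (3/2) := h4
      _ ≤ 9/2 := h5.le
  have h2m : 0 ≤ 1 - 2/m := by
    rw [sub_nonneg, div_le_one hm0]; linarith
  have hB : ε * (1 - 2/m) ≤ (2/9) * (1/m)^2 := by
    have hnum : (0:ℝ) ≤ 2*m^2 - 11*m + 18 := by nlinarith
    have hid : (2/9)*(1/m)^2 - ε*(1-2/m) = (2*m^2-11*m+18)/(9*m^3*(m-1)) := by
      rw [he]; field_simp; ring
    have hpos : (0:ℝ) ≤ (2*m^2-11*m+18)/(9*m^3*(m-1)) :=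
      div_nonneg hnum (by positivity)
    linarith [hid ▸ hpos]
  have step2 : x^K * (ε * (1 - 2/m)) ≤ (1/m)^(n^2) := by
    calc x^K * (ε * (1 - 2/m)) = (1+t)^K * (1/m)^K * (ε * (1-2/m)) := by
          rw [hxeq, mul_pow]
      _ ≤ (9/2) * (1/m)^K * ((2/9) * (1/m)^2) := by
          apply mul_le_mul (mul_le_mul_of_nonneg_right hA (by positivity)) hB
            (mul_nonneg he0.le h2m) (by positivity)
      _ = (1/m)^(K+2) := by rw [pow_add]; ring
      _ = (1/m)^(n^2) := by rw [hK]
  linarith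
end

section
/- For every integer n > 2, ((n²−n+1)/(n²−n))^{n²} · (n³−3n²+2n−1)/(n²−n+1)² < 1. -/
theorem combined_inequality (n : ℕ) (hn : 2 < n) :
    (((n : ℝ) ^ 2 - n + 1) / ((n : ℝ) ^ 2 - n)) ^ (n ^ 2) *
        (((n : ℝ) ^ 3 - 3 * (n : ℝ) ^ 2 + 2 * n - 1) / ((n : ℝ) ^ 2 - n + 1) ^ 2) < 1 := by
  set x : ℝ := (n : ℝ) with hxdef
  have hx : (3 : ℝ) ≤ x := by { have : (3:ℕ) ≤ n := hn; rw [hxdef]; exact_mod_cast this }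
  have hden : (0 : ℝ) < x ^ 2 - x := by nlinarith
  have hden2 : (0 : ℝ) < (x ^ 2 - x + 1) ^ 2 := by positivity
  -- first factor bound
  have hA : (x ^ 2 - x + 1) / (x ^ 2 - x) ≤ Real.exp (1 / (x ^ 2 - x)) := by
    have h := Real.add_one_le_exp (1 / (x ^ 2 - x))
    have : (x ^ 2 - x + 1) / (x ^ 2 - x) = 1 / (x ^ 2 - x) + 1 := by
      rw [div_add_one hden.ne']; ring
    rw [this]; exact h
  have hA0 : (0 : ℝ) ≤ (x ^ 2 - x + 1) / (x ^ 2 - x) := by positivity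
  have hpow : ((x ^ 2 - x + 1) / (x ^ 2 - x)) ^ (n ^ 2)
      ≤ Real.exp ((n ^ 2 : ℕ) * (1 / (x ^ 2 - x))) := by
    rw [Real.exp_nat_mul]
    exact pow_le_pow_left₀ hA0 hA _
  have hexpo : ((n ^ 2 : ℕ) : ℝ) * (1 / (x ^ 2 - x)) ≤ 3 / 2 := by
    have hcast : ((n ^ 2 : ℕ) : ℝ) = x ^ 2 := by push_cast [hxdef]; ring
    rw [hcast, mul_one_div, div_le_iff₀ hden]
    nlinarith
  have hexp32 : Real.exp (3 / 2) < 4.5 := by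
    have h1 : Real.exp (3 / 2) ^ 2 = Real.exp 1 ^ 3 := by
      rw [← Real.exp_nat_mul, ← Real.exp_nat_mul]; norm_num
    have h2 : Real.exp 1 < 2.7182818286 := Real.exp_one_lt_d9
    have h3 : Real.exp (3 / 2) ^ 2 < (4.5 : ℝ) ^ 2 := by
      rw [h1]
      calc Real.exp 1 ^ 3 < 2.7182818286 ^ 3 := by
            exact pow_lt_pow_left₀ h2 (Real.exp_pos 1).le (by norm_num)
        _ < (4.5 : ℝ) ^ 2 := by norm_num
    exact lt_of_pow_lt_pow_left₀ 2 (by norm_num) h3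
  have hAbound : ((x ^ 2 - x + 1) / (x ^ 2 - x)) ^ (n ^ 2) < 4.5 :=
    lt_of_le_of_lt (hpow.trans (Real.exp_le_exp.mpr hexpo)) hexp32
  -- second factor
  have hnum : (0 : ℝ) < x ^ 3 - 3 * x ^ 2 + 2 * x - 1 := by nlinarith
  have hB0 : (0 : ℝ) ≤ (x ^ 3 - 3 * x ^ 2 + 2 * x - 1) / (x ^ 2 - x + 1) ^ 2 := by
    positivity
  have key : 4.5 * ((x ^ 3 - 3 * x ^ 2 + 2 * x - 1) / (x ^ 2 - x + 1) ^ 2) < 1 := by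
    rw [mul_div_assoc', div_lt_one hden2]
    nlinarith [sq_nonneg (x - 3), sq_nonneg x, sq_nonneg (x ^ 2 - 3 * x), mul_pos hden hden]
  calc ((x ^ 2 - x + 1) / (x ^ 2 - x)) ^ (n ^ 2) *
        ((x ^ 3 - 3 * x ^ 2 + 2 * x - 1) / (x ^ 2 - x + 1) ^ 2)
      ≤ 4.5 * ((x ^ 3 - 3 * x ^ 2 + 2 * x - 1) / (x ^ 2 - x + 1) ^ 2) :=
        mul_le_mul_of_nonneg_right hAbound.le hB0
    _ < 1 := key
end

section
/- Let n ≥ 2 be an integer and suppose that for some δ > 0 one has a monic integer polynomial p of degree d with sup_{x∈[0, 1/(n−1) − δ]} |p(x)|^{1/d} = 1/n. If 1/(n−1) ≤ t_M([0,1/(n−1)]) and the inequality t_M([0, 1/(n−1)]) ≤ t_M([0, 1/(n−1) − δ])·(1 + k_{1/(n−1)−δ, δ}) holds with k_{b,δ} = (2δ/b)(1+√(1+b/δ)), then δ ≥ 1/(4n³ − 8n² + 5n − 1). -/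
private lemma monicIntTransDiam_le_of_poly (b : ℝ) (hb : 0 < b) (r : ℝ) (hr : 0 < r)
    (d : ℕ) (hd : d ≠ 0) (p : Polynomial ℤ) (hp : p.Monic) (hpd : p.natDegree = d)
    (hS : (⨆ x : Set.Icc (0 : ℝ) b, |Polynomial.aeval (x : ℝ) p|) = r ^ d) :
    monicIntTransDiam (Set.Icc 0 b) ≤ r := by
  haveI hne : Nonempty (Set.Icc (0 : ℝ) b) := (Set.nonempty_Icc.2 hb.le).to_subtype
  unfold monicIntTransDiam
  set u : ℕ → ℝ := fun m => sInf {y : ℝ | ∃ q : Polynomial ℤ, q.Monic ∧ q.natDegree = m ∧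
      y = (⨆ x : Set.Icc (0:ℝ) b, |Polynomial.aeval (x : ℝ) q|) ^ ((1 : ℝ) / m)} with hu
  set C : ℝ := max 1 (b / r) with hC
  have hC1 : (1:ℝ) ≤ C := le_max_left _ _
  have hC0 : (0:ℝ) < C := lt_of_lt_of_le one_pos hC1
  have hbrC : b ≤ r * C := by
    have h := le_max_right 1 (b / r)
    calc b = r * (b / r) := by field_simp
    _ ≤ r * C := by exact mul_le_mul_of_nonneg_left h hr.le
  set v : ℕ → ℝ := fun m => r * C ^ ((d:ℝ)/m) with hv
  -- the function x ↦ |p(x)| is bounded on [0,b]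
  have hcont : Continuous fun x : ℝ => |Polynomial.aeval x p| :=
    (p.continuous_aeval).abs
  have hBdd : BddAbove (Set.range fun x : Set.Icc (0:ℝ) b =>
      |Polynomial.aeval (x:ℝ) p|) := by
    rw [show (fun x : Set.Icc (0:ℝ) b => |Polynomial.aeval (x:ℝ) p|) =
        (Set.Icc (0:ℝ) b).domRestrict (fun x : ℝ => |Polynomial.aeval x p|) from rfl,
      Set.range_domRestrict]
    exact (isCompact_Icc.image hcont).bddAbove
  have hle : ∀ x : Set.Icc (0:ℝ) b, |Polynomial.aeval (x:ℝ) p| ≤ r ^ d :=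
    fun x => hS ▸ le_ciSup hBdd x
  -- sets are bounded below by 0 and nonempty
  have hsetBdd : ∀ m : ℕ, BddBelow {y : ℝ | ∃ q : Polynomial ℤ, q.Monic ∧ q.natDegree = m ∧
      y = (⨆ x : Set.Icc (0:ℝ) b, |Polynomial.aeval (x : ℝ) q|) ^ ((1 : ℝ) / m)} := by
    intro m
    refine ⟨0, ?_⟩
    rintro y ⟨q, -, -, rfl⟩
    exact Real.rpow_nonneg (Real.iSup_nonneg fun _ => abs_nonneg _) _
  have hu0 : ∀ m : ℕ, 0 ≤ u m := by
    intro m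
    refine le_csInf ⟨_, ⟨Polynomial.X ^ m, Polynomial.monic_X_pow m,
      Polynomial.natDegree_X_pow m, rfl⟩⟩ ?_
    rintro y ⟨q, -, -, rfl⟩
    exact Real.rpow_nonneg (Real.iSup_nonneg fun _ => abs_nonneg _) _
  -- main bound for m ≥ 1
  have hbound : ∀ m : ℕ, 1 ≤ m → u m ≤ v m := by
    intro m hm
    have hm0 : ((m:ℝ)) ≠ 0 := Nat.cast_ne_zero.2 (by omega)
    set k := m / d with hk
    set j := m % d with hj
    set q : Polynomial ℤ := p ^ k * Polynomial.X ^ j with hqdef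
    have hq : q.Monic := (hp.pow k).mul (Polynomial.monic_X_pow j)
    have hdkj : d * k + j = m := Nat.div_add_mod m d
    have hqd : q.natDegree = m := by
      rw [hqdef, (hp.pow k).natDegree_mul (Polynomial.monic_X_pow j),
        Polynomial.natDegree_pow, hpd, Polynomial.natDegree_X_pow, Nat.mul_comm]
      exact hdkj
    have hjd : j ≤ d := (Nat.mod_lt m (Nat.pos_of_ne_zero hd)).le
    have hsupq : (⨆ x : Set.Icc (0:ℝ) b, |Polynomial.aeval (x:ℝ) q|) ≤ (r^d)^k * b^j := by
      apply ciSup_le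
      intro x
      have hx0 : (0:ℝ) ≤ x := x.2.1
      have hxb : (x:ℝ) ≤ b := x.2.2
      have he : Polynomial.aeval (x:ℝ) q = (Polynomial.aeval (x:ℝ) p)^k * (x:ℝ)^j := by
        simp [hqdef]
      rw [he, abs_mul, abs_pow, abs_pow]
      have h1 : |Polynomial.aeval (x:ℝ) p| ^ k ≤ (r^d)^k :=
        pow_le_pow_left₀ (abs_nonneg _) (hle x) k
      have h2 : |(x:ℝ)| ^ j ≤ b ^ j := by
        rw [abs_of_nonneg hx0]
        exact pow_le_pow_left₀ hx0 hxb j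
      exact mul_le_mul h1 h2 (pow_nonneg (abs_nonneg _) _)
        (pow_nonneg (pow_nonneg hr.le _) _)
    have hkey : (r^d)^k * b^j ≤ r^m * C^d := by
      have h1 : b^j ≤ (r*C)^j := pow_le_pow_left₀ hb.le hbrC j
      have h2 : C^j ≤ C^d := pow_le_pow_right₀ hC1 hjd
      calc (r^d)^k * b^j ≤ (r^d)^k * (r*C)^j := by
            exact mul_le_mul_of_nonneg_left h1 (pow_nonneg (pow_nonneg hr.le _) _)
        _ = r^(d*k+j) * C^j := by rw [mul_pow, ← pow_mul, pow_add]; ring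
        _ = r^m * C^j := by rw [hdkj]
        _ ≤ r^m * C^d := mul_le_mul_of_nonneg_left h2 (pow_nonneg hr.le _)
    have hsinf : u m ≤ ((r^m * C^d) : ℝ) ^ ((1:ℝ)/m) := by
      refine le_trans (csInf_le (hsetBdd m) ⟨q, hq, hqd, rfl⟩) ?_
      exact Real.rpow_le_rpow (Real.iSup_nonneg fun _ => abs_nonneg _)
        (hsupq.trans hkey) (by positivity)
    have heq : ((r^m * C^d) : ℝ) ^ ((1:ℝ)/m) = v m := by
      have e1 : ((m:ℝ)) * ((1:ℝ)/m) = 1 := by field_simp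
      have e2 : ((d:ℝ)) * ((1:ℝ)/m) = (d:ℝ)/m := by ring
      rw [← Real.rpow_natCast r m, ← Real.rpow_natCast C d,
        Real.mul_rpow (Real.rpow_nonneg hr.le _) (Real.rpow_nonneg hC0.le _),
        ← Real.rpow_mul hr.le, ← Real.rpow_mul hC0.le, e1, e2, Real.rpow_one]
    rw [← heq]
    exact hsinf
  -- v tends to r
  have h0 : Filter.Tendsto (fun m : ℕ => (d:ℝ)/m) Filter.atTop (nhds 0) :=
    tendsto_const_div_atTop_nhds_zero_nat (𝕜 := ℝ) d
  have hvC : Filter.Tendsto (fun m : ℕ => C ^ ((d:ℝ)/m)) Filter.atTop (nhds 1) := by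
    have := (Real.continuousAt_const_rpow (b := (0:ℝ)) hC0.ne').tendsto.comp h0
    simpa [Function.comp_def] using this
  have hvlim : Filter.Tendsto v Filter.atTop (nhds r) := by
    have := hvC.const_mul r
    simpa [hv] using this
  have hlim : Filter.limsup u Filter.atTop ≤ Filter.limsup v Filter.atTop := by
    refine Filter.limsup_le_limsup (Filter.eventually_atTop.2 ⟨1, hbound⟩) ?_ ?_
    · exact Filter.isCoboundedUnder_le_of_le _ hu0
    · exact hvlim.isBoundedUnder_le
  calc Filter.limsup u Filter.atTop ≤ Filter.limsup v Filter.atTop := hlim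
    _ = r := hvlim.limsup_eq

set_option maxHeartbeats 1000000 in
theorem delta_lower_bound (n : ℕ) (hn : 2 ≤ n) (δ : ℝ) (hδ : 0 < δ)
    (hδ' : δ < 1 / ((n : ℝ) - 1))
    (d : ℕ) (p : Polynomial ℤ) (hp : p.Monic) (hpd : p.natDegree = d)
    (hsup : (⨆ x : Set.Icc (0 : ℝ) (1 / ((n : ℝ) - 1) - δ),
        |Polynomial.aeval (x : ℝ) p|) ^ ((1 : ℝ) / d) = 1 / (n : ℝ))
    (h1 : 1 / ((n : ℝ) - 1) ≤ monicIntTransDiam (Set.Icc 0 (1 / ((n : ℝ) - 1))))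
    (h2 : monicIntTransDiam (Set.Icc 0 (1 / ((n : ℝ) - 1))) ≤
        monicIntTransDiam (Set.Icc 0 (1 / ((n : ℝ) - 1) - δ)) *
          (1 + (2 * δ / (1 / ((n : ℝ) - 1) - δ)) *
            (1 + Real.sqrt (1 + (1 / ((n : ℝ) - 1) - δ) / δ)))) :
    δ ≥ 1 / (4 * (n : ℝ) ^ 3 - 8 * (n : ℝ) ^ 2 + 5 * n - 1) := by
  have hN2 : (2:ℝ) ≤ (n:ℝ) := by exact_mod_cast hn
  set N : ℝ := (n:ℝ) with hNdef
  have hN1 : (0:ℝ) < N - 1 := by linarith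
  have hN0 : (0:ℝ) < N := by linarith
  set a : ℝ := 1 / (N - 1) with haeq
  have ha : 0 < a := by positivity
  set b : ℝ := a - δ with hbdef
  have hb : 0 < b := by simp only [hbdef]; linarith
  have hr : (0:ℝ) < 1 / N := by positivity
  -- d ≠ 0
  have hd : d ≠ 0 := by
    intro h
    rw [h] at hsup
    simp only [Nat.cast_zero, div_zero, Real.rpow_zero] at hsup
    have : (1:ℝ)/N < 1 := by rw [div_lt_one hN0]; linarith
    linarith [hsup]
  have hd0 : ((d:ℝ)) ≠ 0 := Nat.cast_ne_zero.2 hd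
  -- the sup equals (1/N)^d
  set S : ℝ := ⨆ x : Set.Icc (0 : ℝ) b, |Polynomial.aeval (x : ℝ) p| with hSdef
  have hS0 : 0 ≤ S := Real.iSup_nonneg fun _ => abs_nonneg _
  have hSval : S = (1/N) ^ d := by
    have e : (S ^ ((1:ℝ)/d)) ^ (d:ℝ) = S := by
      rw [← Real.rpow_mul hS0, one_div_mul_cancel hd0, Real.rpow_one]
    rw [← e, hsup, Real.rpow_natCast]
  -- key transfinite diameter bound
  have key : monicIntTransDiam (Set.Icc 0 b) ≤ 1 / N :=
    monicIntTransDiam_le_of_poly b hb (1/N) hr d hd p hp hpd hSval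
  -- combine the hypotheses
  set s : ℝ := Real.sqrt (1 + b / δ) with hsdef
  have hs0 : 0 ≤ s := Real.sqrt_nonneg _
  have hs2 : s ^ 2 = 1 + b / δ := Real.sq_sqrt (by positivity)
  have hk0 : (0:ℝ) ≤ (2 * δ / b) * (1 + s) := by positivity
  have hmain : a ≤ (1/N) * (1 + (2 * δ / b) * (1 + s)) := by
    refine h1.trans (h2.trans ?_)
    exact mul_le_mul_of_nonneg_right key (by linarith)
  -- algebra
  clear hsup hSval hS0 h1 h2 key hp hpd hk0
  clear_value N a b S s
  have hNa : N * a = a + 1 := by rw [haeq]; field_simp; ring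
  have h3 : N * a ≤ 1 + (2 * δ / b) * (1 + s) := by
    have := mul_le_mul_of_nonneg_left hmain hN0.le
    calc N * a ≤ N * ((1/N) * (1 + (2 * δ / b) * (1 + s))) := this
      _ = 1 + (2 * δ / b) * (1 + s) := by field_simp
  have h4 : a ≤ (2 * δ / b) * (1 + s) := by rw [hNa] at h3; linarith
  have hab : a * b ≤ 2 * δ * (1 + s) := by
    have := mul_le_mul_of_nonneg_right h4 hb.le
    calc a * b ≤ (2 * δ / b) * (1 + s) * b := this
      _ = 2 * δ * (1 + s) := by field_simp
  have hcore : a ^ 3 ≤ δ * (a + 2) ^ 2 := by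
    rcases le_or_gt (a * b) (2 * δ) with hc | hc
    · -- a * (a - δ) ≤ 2δ  ⇒  a² ≤ δ(a+2)  ⇒  a³ ≤ δ(a+2)²
      have h5 : a ^ 2 ≤ δ * (a + 2) := by nlinarith [hc, hbdef]
      nlinarith [mul_le_mul_of_nonneg_left h5 ha.le, hδ, ha]
    · have h4' : 0 ≤ a * b - 2 * δ := by linarith
      have h5 : a * b - 2 * δ ≤ 2 * δ * s := by linarith
      have h6 : (a * b - 2 * δ) ^ 2 ≤ (2 * δ * s) ^ 2 :=
        pow_le_pow_left₀ h4' h5 2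
      have h7 : (2 * δ * s) ^ 2 = 4 * δ ^ 2 + 4 * δ * b := by
        have : (2 * δ * s) ^ 2 = 4 * δ ^ 2 * s ^ 2 := by ring
        rw [this, hs2]
        field_simp
      have h8 : a ^ 2 * b ≤ 4 * δ * (1 + a) := by nlinarith [h6, h7, hb]
      nlinarith [h8, hδ, ha, hbdef]
  -- final numeric conclusion
  have hD : (0:ℝ) < 4 * N ^ 3 - 8 * N ^ 2 + 5 * N - 1 := by nlinarith [hN2]
  rw [ge_iff_le, div_le_iff₀ hD]
  have e3 : δ * ((a + 2) ^ 2) * (N - 1) ^ 3 = δ * (4 * N ^ 3 - 8 * N ^ 2 + 5 * N - 1) := by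
    rw [haeq]; field_simp; ring
  have e4 : (1:ℝ) = a ^ 3 * (N - 1) ^ 3 := by rw [haeq]; field_simp
  have := mul_le_mul_of_nonneg_right hcore (by positivity : (0:ℝ) ≤ (N - 1) ^ 3)
  calc (1:ℝ) = a ^ 3 * (N - 1) ^ 3 := e4
    _ ≤ δ * (a + 2) ^ 2 * (N - 1) ^ 3 := this
    _ = δ * (4 * N ^ 3 - 8 * N ^ 2 + 5 * N - 1) := e3
end
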